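/- arXiv:1903.01479 — 9 statements merged into one kernel-verified Lean document; each statement's English description precedes it below -/
import Mathlib

section
/- Let ρ and σ be qubit density matrices and p ∈ [0,1]. There exists a finite family (K_i) of incoherent 2×2 Kraus operators with ∑_i K_iᴴK_i ⪯ I and ∑_i K_i ρ K_iᴴ = p·σ if and only if there exists a finite family (L_j) of strictly incoherent 2×2 Kraus operators with ∑_j L_jᴴL_j ⪯ I and ∑_j L_j ρ L_jᴴ = p·σ. (Equivalence of stochastic IO and stochastic SIO transformations for qubits.) -/
open Matrix BigOperators
open scoped Kronecker Classical ComplexOrder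

/-- The qubit state with Bloch vector `(rx, ry, rz)`:
`ρ = (1/2)(I + rx σx + ry σy + rz σz)`. -/
noncomputable def blochState (rx ry rz : ℝ) : Matrix (Fin 2) (Fin 2) ℂ :=
  !![(1 + rz : ℂ)/2, ((rx : ℂ) - ry * Complex.I)/2;
     ((rx : ℂ) + ry * Complex.I)/2, (1 - rz : ℂ)/2]

/-- `K` is an incoherent Kraus operator: every column has at most one nonzero entry. -/
def IsIncoherentKraus {d : ℕ} (K : Matrix (Fin d) (Fin d) ℂ) : Prop :=
  ∀ j i i', K i j ≠ 0 → K i' j ≠ 0 → i = i'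

/-- `K` is a strictly incoherent Kraus operator: every row and every column
has at most one nonzero entry. -/
def IsSIKraus {d : ℕ} (K : Matrix (Fin d) (Fin d) ℂ) : Prop :=
  (∀ i j j', K i j ≠ 0 → K i j' ≠ 0 → j = j') ∧
  (∀ j i i', K i j ≠ 0 → K i' j ≠ 0 → i = i')

/-- Partial trace over the first (A) factor. -/
noncomputable def ptraceA {dA dB : ℕ} (X : Matrix (Fin dA × Fin dB) (Fin dA × Fin dB) ℂ) :
    Matrix (Fin dB) (Fin dB) ℂ :=
  fun j j' => ∑ i, X (i, j) (i, j')

/-- Partial trace over the second (B) factor. -/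
noncomputable def ptraceB {dA dB : ℕ} (X : Matrix (Fin dA × Fin dB) (Fin dA × Fin dB) ℂ) :
    Matrix (Fin dA) (Fin dA) ℂ :=
  fun i i' => ∑ j, X (i, j) (i', j)

/-- The completely dephasing map: keep the diagonal of `X`. -/
noncomputable def dephase {d : ℕ} (X : Matrix (Fin d) (Fin d) ℂ) : Matrix (Fin d) (Fin d) ℂ :=
  Matrix.diagonal X.diag

/-! A qubit Kraus operator that is incoherent but not strictly incoherent sends both basis vectors
to multiples of the same `|r⟩`, so its output `K ρ Kᴴ` is diagonal. Keep the strictly incoherent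
operators, whose Gram matrices `A` sum to a diagonal matrix, and let `diag b = 1 - A` be the unused
budget. The other operators produce a diagonal output `diag c` with
`∑ c = tr (ρ B) ≤ tr (ρ (1 - A)) = ∑ⱼ bⱼ ρⱼⱼ =: D`, where `B ⪯ 1 - A` is their Gram matrix. The same
output is produced by the strictly incoherent operators `√(cᵢ bⱼ / D) |i⟩⟨j|`, whose Gram matrix
`(∑ c / D) • diag b` fits into the unused budget. -/

namespace Matrix

variable {n : Type*}

lemma isDiag_sum {ι α : Type*} [Fintype ι] [AddCommMonoid α] {f : ι → Matrix n n α}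
    (hf : ∀ i, (f i).IsDiag) : (∑ i, f i).IsDiag :=
  Finset.sum_induction f (fun M : Matrix n n α => M.IsDiag) (fun _ _ => IsDiag.add) isDiag_zero
    fun i _ => hf i

variable [DecidableEq n]

lemma sum_diagonal {ι α : Type*} [Fintype ι] [AddCommMonoid α] (f : ι → n → α) :
    ∑ i, diagonal (f i) = diagonal (∑ i, f i) :=
  (map_sum (diagonalAddMonoidHom n α) f Finset.univ).symm

lemma PosSemidef.eq_diagonal_re {M : Matrix n n ℂ} (hM : M.PosSemidef) (hD : M.IsDiag) :
    M = diagonal fun i => ((M i i).re : ℂ) := by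
  conv_lhs => rw [← hD.diagonal_diag, ← hM.isHermitian.coe_re_diag]
  rfl

variable [Fintype n]

lemma PosSemidef.trace_mul_nonneg {A B : Matrix n n ℂ} (hA : A.PosSemidef) (hB : B.PosSemidef) :
    0 ≤ (A * B).trace := by
  obtain ⟨C, rfl⟩ : ∃ C : Matrix n n ℂ, A = Cᴴ * C := by
    open scoped MatrixOrder Matrix.Norms.L2Operator in
    exact CStarAlgebra.nonneg_iff_eq_star_mul_self.mp hA.nonneg
  rw [Matrix.mul_assoc, trace_mul_comm]
  exact (hB.mul_mul_conjTranspose_same C).trace_nonneg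

lemma IsHermitian.trace_mul_diagonal_ofReal {ρ : Matrix n n ℂ} (hρ : ρ.IsHermitian)
    (b : n → ℝ) : (ρ * diagonal fun j => (b j : ℂ)).trace = ((∑ j, b j * (ρ j j).re : ℝ) : ℂ) := by
  simp only [trace, diag, mul_diagonal, Complex.ofReal_sum, Complex.ofReal_mul]
  exact Finset.sum_congr rfl fun j _ => by
    rw [mul_comm]; exact congrArg ((b j : ℂ) * ·) (hρ.coe_re_apply_self j).symm

end Matrix

section Kraus

variable {d : ℕ}

lemma isSIKraus_single (i j : Fin d) (z : ℂ) : IsSIKraus (single i j z) := by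
  constructor <;> intro _ _ _ h h' <;>
    simp only [single_apply, ne_eq, ite_eq_right_iff, Classical.not_imp] at h h' <;> grind

lemma IsSIKraus.isDiag_conjTranspose_mul_self {K : Matrix (Fin d) (Fin d) ℂ}
    (hK : IsSIKraus K) : (Kᴴ * K).IsDiag := by
  intro i j hij
  rw [mul_apply]
  refine Finset.sum_eq_zero fun a _ => ?_
  by_cases h : K a i = 0
  · simp [h]
  · simp [show K a j = 0 from not_not.mp fun h' => hij (hK.1 a i j h h')]

lemma isDiag_mul_mul_conjTranspose_of_eq_zero {K : Matrix (Fin d) (Fin d) ℂ} {r : Fin d}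
    (hK : ∀ a b, a ≠ r → K a b = 0) (ρ : Matrix (Fin d) (Fin d) ℂ) : (K * ρ * Kᴴ).IsDiag := by
  intro i j hij
  by_cases hi : i = r
  · simp [mul_apply, hK j _ (hi ▸ hij).symm]
  · simp [mul_apply, hK i _ hi]

lemma IsIncoherentKraus.exists_eq_zero_of_not_isSIKraus {K : Matrix (Fin 2) (Fin 2) ℂ}
    (hK : IsIncoherentKraus K) (hS : ¬ IsSIKraus K) : ∃ r, ∀ a b, a ≠ r → K a b = 0 := by
  obtain ⟨r, b, b', hb, hb', hbb'⟩ : ∃ r b b', K r b ≠ 0 ∧ K r b' ≠ 0 ∧ b ≠ b' := by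
    by_contra! h
    exact hS ⟨h, hK⟩
  refine ⟨r, fun a c ha => by_contra fun hc => ha (hK c a r hc ?_)⟩
  obtain rfl | rfl : c = b ∨ c = b' := by omega
  exacts [hb, hb']

theorem exists_isSIKraus_family_eq_diagonal {ρ : Matrix (Fin d) (Fin d) ℂ} (hρ : ρ.IsHermitian)
    {b c : Fin d → ℝ} (hb : 0 ≤ b) (hc : 0 ≤ c) (hcb : ∑ i, c i ≤ ∑ j, b j * (ρ j j).re) :
    ∃ L : Fin d × Fin d → Matrix (Fin d) (Fin d) ℂ, (∀ k, IsSIKraus (L k)) ∧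
      (diagonal (fun j => (b j : ℂ)) - ∑ k, (L k)ᴴ * L k).PosSemidef ∧
      ∑ k, L k * ρ * (L k)ᴴ = diagonal fun i => (c i : ℂ) := by
  set r : Fin d → ℝ := fun j => (ρ j j).re
  have hr : ∀ j, (r j : ℂ) = ρ j j := hρ.coe_re_apply_self
  set D := ∑ j, b j * r j
  have hD : 0 ≤ D := (Finset.sum_nonneg fun i _ => hc i).trans hcb
  -- If `D = 0` then every `c i` vanishes, so the junk value `c i / 0 = 0` is harmless.
  have hcD : ∀ i, c i / D * D = c i := fun i => by
    rcases hD.eq_or_lt with h0 | hpos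
    · have : c i ≤ 0 :=
        (Finset.single_le_sum (fun i _ => hc i) (Finset.mem_univ i)).trans (hcb.trans h0.ge)
      rw [le_antisymm this (hc i), zero_div, zero_mul]
    · exact div_mul_cancel₀ _ hpos.ne'
  set w : Fin d → Fin d → ℝ := fun i j => c i / D * b j
  have hw : ∀ i j, 0 ≤ w i j := fun i j => mul_nonneg (div_nonneg (hc i) hD) (hb j)
  have hsq : ∀ i j, star (Real.sqrt (w i j) : ℂ) * Real.sqrt (w i j) = w i j := fun i j => by
    rw [Complex.star_def, Complex.conj_ofReal, ← Complex.ofReal_mul, Real.mul_self_sqrt (hw i j)]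
  refine ⟨fun k => single k.1 k.2 (Real.sqrt (w k.1 k.2) : ℂ), fun k => isSIKraus_single _ _ _,
    ?_, ?_⟩
  · have hgram : ∑ k : Fin d × Fin d, (single k.1 k.2 (Real.sqrt (w k.1 k.2) : ℂ))ᴴ *
        single k.1 k.2 (Real.sqrt (w k.1 k.2) : ℂ) =
        diagonal fun j => ((∑ i, c i / D * b j : ℝ) : ℂ) := by
      simp only [conjTranspose_single, single_mul_single_same, hsq, Fintype.sum_prod_type,
        sum_single_eq_diagonal, sum_diagonal]
      congr 1; ext j; simp [w]
    rw [hgram, diagonal_sub, posSemidef_diagonal_iff]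
    intro j
    rw [← Complex.ofReal_sub, Complex.zero_le_real, ← Finset.sum_mul, sub_nonneg, ← Finset.sum_div]
    exact mul_le_of_le_one_left (hb j) (div_le_one_of_le₀ hcb hD)
  · have hterm : ∀ i j, (Real.sqrt (w i j) : ℂ) * ρ j j * star (Real.sqrt (w i j) : ℂ) =
        ((w i j * r j : ℝ) : ℂ) := fun i j => by
      rw [mul_comm, ← mul_assoc, hsq, ← hr, ← Complex.ofReal_mul]
    simp only [conjTranspose_single, single_mul_mul_single, hterm, Fintype.sum_prod_type]
    rw [Finset.sum_comm]
    simp only [sum_single_eq_diagonal, sum_diagonal]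
    congr 1; ext i
    simp only [Finset.sum_apply, w, mul_assoc]
    rw [← Complex.ofReal_sum, ← Finset.mul_sum, hcD]

theorem exists_isSIKraus_family_of_isDiag {ι κ : Type*} [Fintype ι] [Fintype κ]
    {ρ : Matrix (Fin d) (Fin d) ℂ} (hρ : ρ.PosSemidef)
    {G : ι → Matrix (Fin d) (Fin d) ℂ} (hG : ∀ i, IsSIKraus (G i))
    {H : κ → Matrix (Fin d) (Fin d) ℂ} (hH : (∑ k, H k * ρ * (H k)ᴴ).IsDiag)
    (hbud : (1 - (∑ i, (G i)ᴴ * G i + ∑ k, (H k)ᴴ * H k)).PosSemidef) :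
    ∃ L : ι ⊕ (Fin d × Fin d) → Matrix (Fin d) (Fin d) ℂ, (∀ l, IsSIKraus (L l)) ∧
      (1 - ∑ l, (L l)ᴴ * L l).PosSemidef ∧
      ∑ l, L l * ρ * (L l)ᴴ = ∑ i, G i * ρ * (G i)ᴴ + ∑ k, H k * ρ * (H k)ᴴ := by
  set A := ∑ i, (G i)ᴴ * G i
  set B := ∑ k, (H k)ᴴ * H k
  set M := ∑ k, H k * ρ * (H k)ᴴ
  have hB : B.PosSemidef :=
    posSemidef_sum _ fun k _ => posSemidef_conjTranspose_mul_self (H k)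
  have h1A : (1 - A).PosSemidef := by
    simpa only [sub_add_eq_sub_sub, sub_add_cancel] using hbud.add hB
  have hM : M.PosSemidef := posSemidef_sum _ fun k _ => hρ.mul_mul_conjTranspose_same (H k)
  set b : Fin d → ℝ := fun j => ((1 - A) j j).re
  set c : Fin d → ℝ := fun i => (M i i).re
  have hA_eq : 1 - A = diagonal fun j => (b j : ℂ) :=
    h1A.eq_diagonal_re (isDiag_one.sub (isDiag_sum fun i => (hG i).isDiag_conjTranspose_mul_self))
  have hM_eq : M = diagonal fun i => (c i : ℂ) := hM.eq_diagonal_re hH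
  have htrace : M.trace ≤ (ρ * (1 - A)).trace := by
    have hMB : M.trace = (ρ * B).trace := by
      simp only [M, B, trace_sum, Finset.mul_sum]
      exact Finset.sum_congr rfl fun k _ => by
        rw [Matrix.mul_assoc, trace_mul_comm, Matrix.mul_assoc, trace_mul_comm]
    have := hρ.trace_mul_nonneg hbud
    rw [sub_add_eq_sub_sub, Matrix.mul_sub, trace_sub] at this
    rw [hMB]; exact sub_nonneg.mp this
  rw [hA_eq, hρ.isHermitian.trace_mul_diagonal_ofReal, hM_eq, trace_diagonal,
    ← Complex.ofReal_sum, Complex.real_le_real] at htrace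
  obtain ⟨L, hL, hLbud, hLout⟩ := exists_isSIKraus_family_eq_diagonal hρ.isHermitian
    (fun j => (Complex.nonneg_iff.mp (h1A.diag_nonneg (i := j))).1)
    (fun i => (Complex.nonneg_iff.mp (hM.diag_nonneg (i := i))).1) htrace
  refine ⟨Sum.elim G L, fun l => l.rec hG hL, ?_, ?_⟩
  · simp only [Fintype.sum_sum_type, Sum.elim_inl, Sum.elim_inr]
    rwa [← sub_sub, hA_eq]
  · simp only [Fintype.sum_sum_type, Sum.elim_inl, Sum.elim_inr]
    rw [hLout, ← hM_eq]

theorem exists_isSIKraus_family_of_isIncoherentKraus_fin_two {ι : Type*} [Fintype ι]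
    {ρ : Matrix (Fin 2) (Fin 2) ℂ} (hρ : ρ.PosSemidef)
    {K : ι → Matrix (Fin 2) (Fin 2) ℂ} (hK : ∀ i, IsIncoherentKraus (K i))
    (hbud : (1 - ∑ i, (K i)ᴴ * K i).PosSemidef) :
    ∃ (N : ℕ) (L : Fin N → Matrix (Fin 2) (Fin 2) ℂ), (∀ j, IsSIKraus (L j)) ∧
      (1 - ∑ j, (L j)ᴴ * L j).PosSemidef ∧
      ∑ j, L j * ρ * (L j)ᴴ = ∑ i, K i * ρ * (K i)ᴴ := by
  have hH : (∑ i : {i // ¬ IsSIKraus (K i)}, K i * ρ * (K i)ᴴ).IsDiag :=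
    isDiag_sum fun i =>
      have ⟨_, hr⟩ := (hK i).exists_eq_zero_of_not_isSIKraus i.2
      isDiag_mul_mul_conjTranspose_of_eq_zero hr ρ
  rw [← Fintype.sum_subtype_add_sum_subtype (fun i => IsSIKraus (K i))] at hbud ⊢
  obtain ⟨L, hL, hLbud, hLout⟩ :=
    exists_isSIKraus_family_of_isDiag hρ (G := fun i : {i // IsSIKraus (K i)} => K i)
      (fun i => i.2) hH hbud
  let e := Fintype.equivFin ({i // IsSIKraus (K i)} ⊕ (Fin 2 × Fin 2))
  refine ⟨_, L ∘ e.symm, fun j => hL _, ?_, ?_⟩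
  · rwa [Function.comp_def, e.symm.sum_comp fun l => (L l)ᴴ * L l]
  · rwa [Function.comp_def, e.symm.sum_comp fun l => L l * ρ * (L l)ᴴ]

end Kraus

theorem stochastic_io_iff_sio_qubit_general
    (ρ σ : Matrix (Fin 2) (Fin 2) ℂ)
    (hρ : ρ.PosSemidef)
    (p : ℝ) :
    (∃ (N : ℕ) (K : Fin N → Matrix (Fin 2) (Fin 2) ℂ),
        (∀ i, IsIncoherentKraus (K i)) ∧
        ((1 : Matrix (Fin 2) (Fin 2) ℂ) - ∑ i, (K i)ᴴ * K i).PosSemidef ∧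
        ∑ i, K i * ρ * (K i)ᴴ = (p : ℂ) • σ) ↔
    (∃ (N : ℕ) (L : Fin N → Matrix (Fin 2) (Fin 2) ℂ),
        (∀ j, IsSIKraus (L j)) ∧
        ((1 : Matrix (Fin 2) (Fin 2) ℂ) - ∑ j, (L j)ᴴ * L j).PosSemidef ∧
        ∑ j, L j * ρ * (L j)ᴴ = (p : ℂ) • σ) := by
  constructor
  · rintro ⟨N, K, hK, hbud, hout⟩
    obtain ⟨M, L, hL, hLbud, hLout⟩ :=
      exists_isSIKraus_family_of_isIncoherentKraus_fin_two hρ hK hbud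
    exact ⟨M, L, hL, hLbud, hLout.trans hout⟩
  · rintro ⟨N, L, hL, hbud, hout⟩
    exact ⟨N, L, fun j => (hL j).2, hbud, hout⟩

/-- Stochastic incoherent operations and stochastic strictly incoherent operations
achieve exactly the same qubit state transformations `ρ → p σ`. -/
theorem stochastic_io_iff_sio_qubit
    (ρ σ : Matrix (Fin 2) (Fin 2) ℂ)
    (hρ : ρ.PosSemidef) (hρtr : ρ.trace = 1)
    (hσ : σ.PosSemidef) (hσtr : σ.trace = 1)
    (p : ℝ) (hp0 : 0 ≤ p) (hp1 : p ≤ 1) :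
    (∃ (N : ℕ) (K : Fin N → Matrix (Fin 2) (Fin 2) ℂ),
        (∀ i, IsIncoherentKraus (K i)) ∧
        ((1 : Matrix (Fin 2) (Fin 2) ℂ) - ∑ i, (K i)ᴴ * K i).PosSemidef ∧
        ∑ i, K i * ρ * (K i)ᴴ = (p : ℂ) • σ) ↔
    (∃ (N : ℕ) (L : Fin N → Matrix (Fin 2) (Fin 2) ℂ),
        (∀ j, IsSIKraus (L j)) ∧
        ((1 : Matrix (Fin 2) (Fin 2) ℂ) - ∑ j, (L j)ᴴ * L j).PosSemidef ∧
        ∑ j, L j * ρ * (L j)ᴴ = (p : ℂ) • σ) :=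
  stochastic_io_iff_sio_qubit_general ρ σ hρ p
end

section
/- Let K be a 2×2 complex matrix that is an incoherent Kraus operator (every column of K has at most one nonzero entry). Then either K is strictly incoherent (every row of K also has at most one nonzero entry), or the matrix K X Kᴴ is diagonal for every 2×2 complex matrix X. (Dichotomy for incoherent qubit Kraus operators: each one is either strictly incoherent or has incoherent output.) -/
/-! A non-strictly-incoherent qubit Kraus operator has a row with two nonzero entries, i.e. a row
that is nonzero in every column; incoherence then forces every other row to vanish, so `K X Kᴴ`
is supported on a single diagonal entry. -/

open Matrix BigOperators
open scoped Kronecker Classical ComplexOrder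

theorem Matrix.isDiag_mul_mul_conjTranspose_of_eq_zero {m n α : Type*} [Fintype n] [Semiring α]
    [StarRing α] {K : Matrix m n α} {i : m} (hK : ∀ a ≠ i, K a = 0) (X : Matrix n n α) :
    (K * X * Kᴴ).IsDiag := by
  intro a b hab
  rcases eq_or_ne a i with rfl | ha
  · have hb : K b = 0 := hK b (Ne.symm hab)
    simp [mul_apply, conjTranspose_apply, hb]
  · simp [mul_apply, hK a ha]

theorem IsIncoherentKraus.row_eq_zero_of_forall_ne_zero {d : ℕ} {K : Matrix (Fin d) (Fin d) ℂ}
    (hK : IsIncoherentKraus K) {i : Fin d} (hi : ∀ j, K i j ≠ 0) (a : Fin d) (ha : a ≠ i) :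
    K a = 0 := by
  funext j
  by_contra h
  exact ha (hK j a i h (hi j))

theorem IsIncoherentKraus.exists_row_forall_ne_zero_of_not_isSIKraus
    {K : Matrix (Fin 2) (Fin 2) ℂ} (hK : IsIncoherentKraus K) (hSI : ¬IsSIKraus K) :
    ∃ i, ∀ j, K i j ≠ 0 := by
  have hrow : ∃ i j j', K i j ≠ 0 ∧ K i j' ≠ 0 ∧ j ≠ j' := by
    by_contra! h
    exact hSI ⟨h, hK⟩
  obtain ⟨i, j, j', hj, hj', hjj'⟩ := hrow
  refine ⟨i, fun c => ?_⟩
  rcases (by omega : c = j ∨ c = j') with rfl | rfl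
  exacts [hj, hj']

/-- Dichotomy for incoherent qubit Kraus operators: each one is either strictly
incoherent, or its output `K X Kᴴ` is diagonal for every input `X`. -/
theorem qubit_incoherent_kraus_dichotomy (K : Matrix (Fin 2) (Fin 2) ℂ)
    (hK : IsIncoherentKraus K) :
    IsSIKraus K ∨ ∀ X : Matrix (Fin 2) (Fin 2) ℂ, (K * X * Kᴴ).IsDiag := by
  refine or_iff_not_imp_left.2 fun hSI X => ?_
  obtain ⟨i, hi⟩ := hK.exists_row_forall_ne_zero_of_not_isSIKraus hSI
  exact isDiag_mul_mul_conjTranspose_of_eq_zero (hK.row_eq_zero_of_forall_ne_zero hi) X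
end

section
/- Let ρ be a density matrix on ℂ^{dA} ⊗ ℂ^{dB} (a positive semidefinite matrix of trace 1 indexed by pairs in Fin dA × Fin dB) with marginals ρ^A = Tr_B ρ and ρ^B = Tr_A ρ, and suppose ρ is correlated, i.e. ρ ≠ ρ^A ⊗ ρ^B. Then there exists a Hermitian dA×dA matrix M with 0 ⪯ M ⪯ I such that t := Tr[(M ⊗ I)·ρ] is a positive real number and Tr_A[(M ⊗ I)·ρ] ≠ t·ρ^B, i.e. the normalized post-measurement state on B differs from ρ^B. -/
open Matrix BigOperators
open scoped Kronecker Classical ComplexOrder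

/-!
Suppose no effect `M` of positive probability changes Bob's state. Then the linear map
`X ↦ Tr_A[(X ⊗ I)ρ] - Tr[(X ⊗ I)ρ] ρᴮ` vanishes on every effect: it kills `I`, and an arbitrary
effect `M` is reached through `(M + I)/2`, whose probability is at least `1/2`. Effects span all
matrices, so the map is zero, and evaluating it on the matrix units `E_ik` gives
`ρ_{(k,j),(i,j')} = ρᴬ_{ki} ρᴮ_{jj'}`.
-/

open scoped Matrix.Norms.L2Operator MatrixOrder in
theorem Matrix.span_posSemidef_one_sub_posSemidef {n : Type*} [Fintype n] [DecidableEq n] :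
    Submodule.span ℂ {M : Matrix n n ℂ | M.PosSemidef ∧ (1 - M).PosSemidef} = ⊤ := by
  rw [eq_top_iff, ← CStarAlgebra.span_nonneg_inter_unitClosedBall]
  refine Submodule.span_mono ?_
  rintro M ⟨hM : 0 ≤ M, hM_norm⟩
  refine ⟨nonneg_iff_posSemidef.mp hM, le_iff.mp ?_⟩
  exact (CStarAlgebra.norm_le_one_iff_of_nonneg M hM).mp (by simpa using hM_norm)

open scoped MatrixOrder in
theorem Matrix.PosSemidef.trace_mul_nonneg_s7 {n 𝕜 : Type*} [Fintype n] [RCLike 𝕜]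
    {A B : Matrix n n 𝕜} (hA : A.PosSemidef) (hB : B.PosSemidef) : 0 ≤ (A * B).trace := by
  obtain ⟨C, rfl⟩ := CStarAlgebra.nonneg_iff_eq_star_mul_self.mp hA.nonneg
  rw [star_eq_conjTranspose, mul_assoc, trace_mul_comm]
  exact (hB.mul_mul_conjTranspose_same C).trace_nonneg

section PartialTrace

variable {dA dB : ℕ}

theorem ptraceA_add (X Y : Matrix (Fin dA × Fin dB) (Fin dA × Fin dB) ℂ) :
    ptraceA (X + Y) = ptraceA X + ptraceA Y := by
  ext j j'
  simp [ptraceA, Finset.sum_add_distrib]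

theorem ptraceA_smul (c : ℂ) (X : Matrix (Fin dA × Fin dB) (Fin dA × Fin dB) ℂ) :
    ptraceA (c • X) = c • ptraceA X := by
  ext j j'
  simp [ptraceA, Finset.mul_sum]

theorem ptraceA_single_kronecker_one_mul (ρ : Matrix (Fin dA × Fin dB) (Fin dA × Fin dB) ℂ)
    (i k : Fin dA) (j j' : Fin dB) :
    ptraceA ((single i k (1 : ℂ) ⊗ₖ (1 : Matrix (Fin dB) (Fin dB) ℂ)) * ρ) j j'
      = ρ (k, j) (i, j') := by
  simp [ptraceA, mul_apply, Fintype.sum_prod_type, kroneckerMap_apply, one_apply, single, ite_and]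

theorem trace_kronecker_one_mul (ρ : Matrix (Fin dA × Fin dB) (Fin dA × Fin dB) ℂ)
    (X : Matrix (Fin dA) (Fin dA) ℂ) :
    ((X ⊗ₖ (1 : Matrix (Fin dB) (Fin dB) ℂ)) * ρ).trace = (X * ptraceB ρ).trace := by
  simp only [trace, diag, mul_apply, Fintype.sum_prod_type, kroneckerMap_apply, one_apply,
    mul_ite, mul_one, mul_zero, ite_mul, zero_mul, Finset.sum_ite_eq, Finset.mem_univ, if_true,
    ptraceB, Finset.mul_sum]
  exact Finset.sum_congr rfl fun _ _ => Finset.sum_comm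

end PartialTrace

noncomputable def steeringDefect {dA dB : ℕ}
    (ρ : Matrix (Fin dA × Fin dB) (Fin dA × Fin dB) ℂ) :
    Matrix (Fin dA) (Fin dA) ℂ →ₗ[ℂ] Matrix (Fin dB) (Fin dB) ℂ where
  toFun X := ptraceA ((X ⊗ₖ (1 : Matrix (Fin dB) (Fin dB) ℂ)) * ρ)
    - ((X ⊗ₖ (1 : Matrix (Fin dB) (Fin dB) ℂ)) * ρ).trace • ptraceA ρ
  map_add' X Y := by
    simp only [add_kronecker, add_mul, ptraceA_add, trace_add, add_smul]
    abel
  map_smul' c X := by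
    simp only [smul_kronecker, smul_mul, ptraceA_smul, trace_smul, smul_eq_mul, mul_smul,
      RingHom.id_apply, smul_sub]

section SteeringDefect

variable {dA dB : ℕ} {ρ : Matrix (Fin dA × Fin dB) (Fin dA × Fin dB) ℂ}

theorem steeringDefect_apply (X : Matrix (Fin dA) (Fin dA) ℂ) :
    steeringDefect ρ X = ptraceA ((X ⊗ₖ (1 : Matrix (Fin dB) (Fin dB) ℂ)) * ρ)
      - ((X ⊗ₖ (1 : Matrix (Fin dB) (Fin dB) ℂ)) * ρ).trace • ptraceA ρ :=
  rfl

theorem steeringDefect_one (htr : ρ.trace = 1) : steeringDefect ρ 1 = 0 := by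
  simp [steeringDefect_apply, htr]

theorem eq_kronecker_ptrace_of_steeringDefect_eq_zero (h : steeringDefect ρ = 0) :
    ρ = ptraceB ρ ⊗ₖ ptraceA ρ := by
  ext ⟨k, j⟩ ⟨i, j'⟩
  have hik := congrFun (congrFun (LinearMap.congr_fun h (single i k 1)) j) j'
  rw [steeringDefect_apply, trace_kronecker_one_mul, trace_single_mul] at hik
  simpa [ptraceA_single_kronecker_one_mul, sub_eq_zero] using hik

theorem steeringDefect_eq_zero (hρ : ρ.PosSemidef) (htr : ρ.trace = 1)
    (h : ∀ M : Matrix (Fin dA) (Fin dA) ℂ, M.PosSemidef → (1 - M).PosSemidef →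
      0 < ((M ⊗ₖ (1 : Matrix (Fin dB) (Fin dB) ℂ)) * ρ).trace → steeringDefect ρ M = 0) :
    steeringDefect ρ = 0 := by
  refine LinearMap.ext_on span_posSemidef_one_sub_posSemidef ?_
  rintro M ⟨hM, hM1⟩
  set N : Matrix (Fin dA) (Fin dA) ℂ := (2 : ℂ)⁻¹ • (M + 1)
  have hN : N.PosSemidef := (hM.add PosSemidef.one).smul (by positivity)
  have hN1 : (1 - N).PosSemidef := by
    convert hM1.smul (a := (2 : ℂ)⁻¹) (by positivity) using 1
    module
  have hNpos : 0 < ((N ⊗ₖ (1 : Matrix (Fin dB) (Fin dB) ℂ)) * ρ).trace := by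
    have hMρ := (hM.kronecker (PosSemidef.one (n := Fin dB))).trace_mul_nonneg_s7 hρ
    simp only [N, smul_kronecker, add_kronecker, one_kronecker_one, smul_mul, add_mul, one_mul,
      trace_smul, trace_add, htr, smul_eq_mul]
    exact mul_pos (by positivity) (add_pos_of_nonneg_of_pos hMρ one_pos)
  have hNM : steeringDefect ρ N = (2 : ℂ)⁻¹ • steeringDefect ρ M := by
    simp [N, steeringDefect_one htr]
  simpa [hNM] using h N hN hN1 hNpos

end SteeringDefect

/-- For any correlated bipartite state `ρ ≠ ρᴬ ⊗ ρᴮ` there is a POVM element `M` on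
Alice's side occurring with positive probability whose normalized post-measurement state
on Bob's side differs from `ρᴮ`. -/
theorem correlated_state_admits_steering_measurement (dA dB : ℕ)
    (ρ : Matrix (Fin dA × Fin dB) (Fin dA × Fin dB) ℂ)
    (hρ : ρ.PosSemidef) (htr : ρ.trace = 1)
    (hcorr : ρ ≠ ptraceB ρ ⊗ₖ ptraceA ρ) :
    ∃ M : Matrix (Fin dA) (Fin dA) ℂ, M.IsHermitian ∧ M.PosSemidef ∧
      ((1 : Matrix (Fin dA) (Fin dA) ℂ) - M).PosSemidef ∧
      ∃ t : ℝ, 0 < t ∧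
        ((M ⊗ₖ (1 : Matrix (Fin dB) (Fin dB) ℂ)) * ρ).trace = (t : ℂ) ∧
        ptraceA ((M ⊗ₖ (1 : Matrix (Fin dB) (Fin dB) ℂ)) * ρ) ≠ (t : ℂ) • ptraceA ρ := by
  by_contra! hno
  refine hcorr (eq_kronecker_ptrace_of_steeringDefect_eq_zero
    (steeringDefect_eq_zero hρ htr fun M hM hM1 hpos => ?_))
  obtain ⟨t, ht, htrace⟩ := RCLike.pos_iff_exists_ofReal.mp hpos
  rw [steeringDefect_apply, hno M hM.isHermitian hM hM1 t ht htrace.symm, ← htrace]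
  exact sub_self _
end

section
/- Let ρ be a density matrix on ℂ^{dA} ⊗ ℂ² (indexed by Fin dA × Fin 2) which is (i) correlated: ρ ≠ (Tr_B ρ) ⊗ (Tr_A ρ), and (ii) not quantum-incoherent with respect to the standard basis on the second (qubit) factor: there exist indices a, a' ∈ Fin dA and i ≠ j in Fin 2 with ρ((a,i),(a',j)) ≠ 0. Let (r_x,r_y,r_z) be the Bloch vector of ρ^B = Tr_A ρ and r = √(r_x²+r_y²). Then there exists a Hermitian dA×dA matrix M with 0 ⪯ M ⪯ I such that t := Tr[(M ⊗ I)·ρ] is a positive real number and the normalized state σ = Tr_A[(M ⊗ I)·ρ]/t, with Bloch vector (s_x,s_y,s_z) and s = √(s_x²+s_y²), satisfies r²·s_z² + (1−r_z²)·s² > r², i.e. σ lies strictly outside the set of states reachable from ρ^B by stochastic incoherent operations. (Correlations enhance Bob's incoherent conversion possibilities whenever the shared state is correlated and not quantum-incoherent.) -/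
open Matrix BigOperators
open scoped Kronecker Classical ComplexOrder

/-!
Write Alice's effect as `M = (1 + c H) / 2` with `-1 ⪯ H ⪯ 1` and `c > 0` small. Bob's conditional
state then has Bloch vector `r + δ d` with `δ > 0`, where `Tr_A[(H ⊗ 1) ρ] = h ρᴮ + (d · σ) / 2`.
The quadratic form `Q(v) = (rx² + ry²) vz² + (1 - rz²)(vx² + vy²)` of the SIO ellipsoid satisfies
`Q(r) = rx² + ry²`, so `Q(r + δ d) - Q(r) = 2 δ B(r, d) + δ² Q(d)` with `B` the polar form of `Q`;
replacing `H` by `-H` makes the linear term nonnegative, and it remains to find `H` with `Q(d) > 0`.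
Non-quantum-incoherence forces `rz² < 1`. If `rx² + ry² > 0`, then `Q` is positive definite and any
`d ≠ 0` will do: a Hermitian contraction `H` detecting an entry where `ρ ≠ ρᴬ ⊗ ρᴮ` gives one.
If `rx = ry = 0`, only the transverse part of `d` counts, and it is supplied by the off-diagonal
entry of `ρ` that witnesses non-quantum-incoherence.
-/

section Contractions

variable {n : Type*} [DecidableEq n]

lemma Matrix.PosSemidef.half_smul_one_add_smul {H : Matrix n n ℂ} (hH : (1 + H).PosSemidef)
    {c : ℝ} (hc₀ : 0 ≤ c) (hc₁ : c ≤ 1) : ((2⁻¹ : ℝ) • (1 + c • H)).PosSemidef := by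
  have : 1 + c • H = (1 - c) • (1 : Matrix n n ℂ) + c • (1 + H) := by module
  rw [this]
  exact ((PosSemidef.one.smul (sub_nonneg.2 hc₁)).add (hH.smul hc₀)).smul (by norm_num)

variable [Fintype n]

lemma Matrix.PosSemidef.apply_eq_zero_of_apply_self_eq_zero {A : Matrix n n ℂ}
    (hA : A.PosSemidef) {p : n} (hp : A p p = 0) (q : n) : A q p = 0 := by
  have h := (hA.dotProduct_mulVec_zero_iff (Pi.single p 1)).mp (by simp [hp])
  simpa using congrFun h q

open scoped MatrixOrder Matrix.Norms.L2Operator in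
lemma Matrix.IsHermitian.exists_pos_smul_bounds {K : Matrix n n ℂ} (hK : K.IsHermitian) :
    ∃ c : ℝ, 0 < c ∧ (1 - c • K).PosSemidef ∧ (1 + c • K).PosSemidef := by
  set c := (‖K‖ + 1)⁻¹
  have hc : 0 < c := by positivity
  have hcK : c * ‖K‖ ≤ 1 := by
    rw [inv_mul_le_iff₀ (by positivity)]
    linarith
  have bound (K' : Matrix n n ℂ) (hK' : K' ≤ algebraMap ℝ _ ‖K‖) : (1 - c • K').PosSemidef := by
    have : 1 - c • K' = c • (algebraMap ℝ _ ‖K‖ - K') + (1 - c * ‖K‖) • (1 : Matrix n n ℂ) := by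
      rw [Algebra.algebraMap_eq_smul_one]
      module
    rw [this]
    exact ((le_iff.mp hK').smul hc.le).add (PosSemidef.one.smul (by linarith))
  refine ⟨c, hc, bound K hK.isSelfAdjoint.le_algebraMap_norm_self, ?_⟩
  have := bound (-K) (by rw [← norm_neg]; exact hK.isSelfAdjoint.neg.le_algebraMap_norm_self)
  rwa [smul_neg, sub_neg_eq_add] at this

lemma exists_isHermitian_trace_mul_ne_zero {C : Matrix n n ℂ} (hC : C ≠ 0) :
    ∃ H : Matrix n n ℂ, H.IsHermitian ∧ (1 - H).PosSemidef ∧ (1 + H).PosSemidef ∧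
      (H * C).trace ≠ 0 := by
  obtain ⟨u, v, huv⟩ : ∃ u v, C u v ≠ 0 := by
    by_contra! h
    exact hC (Matrix.ext h)
  obtain ⟨K, hK, hKC⟩ : ∃ K : Matrix n n ℂ, K.IsHermitian ∧ (K * C).trace ≠ 0 := by
    by_contra! h
    have := congrArg (fun N => (N * C).trace)
      (realPart_add_I_smul_imaginaryPart (single v u (1 : ℂ)))
    simp only [add_mul, smul_mul, trace_add, trace_smul, h _ (realPart _).2,
      h _ (imaginaryPart _).2, trace_single_mul] at this
    exact huv (by simpa using this.symm)
  obtain ⟨c, hc, hc₁, hc₂⟩ := hK.exists_pos_smul_bounds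
  refine ⟨c • K, hK.smul (IsSelfAdjoint.all c), hc₁, hc₂, ?_⟩
  rw [smul_mul, trace_smul]
  exact smul_ne_zero hc.ne' hKC

end Contractions

section PartialTrace

variable {dA dB : ℕ} (X : Matrix (Fin dA × Fin dB) (Fin dA × Fin dB) ℂ)

lemma ptraceA_apply_eq_trace_submatrix (j j' : Fin dB) :
    ptraceA X j j' = (X.submatrix (·, j) (·, j')).trace := rfl

lemma ptraceA_eq_sum_submatrix : ptraceA X = ∑ i, X.submatrix (Prod.mk i) (Prod.mk i) := by
  ext j j'
  simp [ptraceA, Matrix.sum_apply]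

lemma ptraceB_eq_sum_submatrix : ptraceB X = ∑ j, X.submatrix (·, j) (·, j) := by
  ext i i'
  simp [ptraceB, Matrix.sum_apply]

lemma trace_ptraceA : (ptraceA X).trace = X.trace := by
  simp only [Matrix.trace, Matrix.diag, ptraceA, Fintype.sum_prod_type]
  exact Finset.sum_comm

variable {X} in
lemma posSemidef_ptraceA (hX : X.PosSemidef) : (ptraceA X).PosSemidef := by
  rw [ptraceA_eq_sum_submatrix]
  exact posSemidef_sum _ fun i _ => hX.submatrix _

variable {X} in
lemma Matrix.PosSemidef.apply_eq_zero_of_ptraceA_eq_zero (hX : X.PosSemidef) {j : Fin dB}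
    (hj : ptraceA X j j = 0) (i : Fin dA) : X (i, j) (i, j) = 0 :=
  (Finset.sum_eq_zero_iff_of_nonneg fun _ _ => hX.diag_nonneg).mp hj i (Finset.mem_univ i)

lemma submatrix_kronecker_one_mul (N : Matrix (Fin dA) (Fin dA) ℂ) (j j' : Fin dB) :
    ((N ⊗ₖ 1) * X).submatrix (·, j) (·, j') = N * X.submatrix (·, j) (·, j') := by
  ext u w
  simp [Matrix.mul_apply, Fintype.sum_prod_type, Matrix.one_apply]

lemma submatrix_mul_kronecker_one (N : Matrix (Fin dA) (Fin dA) ℂ) (j j' : Fin dB) :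
    (X * (N ⊗ₖ 1)).submatrix (·, j) (·, j') = X.submatrix (·, j) (·, j') * N := by
  ext u w
  simp [Matrix.mul_apply, Fintype.sum_prod_type, Matrix.one_apply]

/-- Bob's unnormalised conditional state when Alice's measurement outcome has effect `N`. -/
noncomputable def steer : Matrix (Fin dA) (Fin dA) ℂ →ₗ[ℂ] Matrix (Fin dB) (Fin dB) ℂ where
  toFun N := ptraceA ((N ⊗ₖ 1) * X)
  map_add' N N' := by
    ext j j'
    simp only [ptraceA_apply_eq_trace_submatrix, submatrix_kronecker_one_mul, Matrix.add_apply,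
      add_mul, trace_add]
  map_smul' c N := by
    ext j j'
    simp only [ptraceA_apply_eq_trace_submatrix, submatrix_kronecker_one_mul, Matrix.smul_apply,
      smul_mul, trace_smul, RingHom.id_apply]

lemma steer_apply (N : Matrix (Fin dA) (Fin dA) ℂ) : steer X N = ptraceA ((N ⊗ₖ 1) * X) := rfl

lemma steer_apply_apply (N : Matrix (Fin dA) (Fin dA) ℂ) (j j' : Fin dB) :
    steer X N j j' = (N * X.submatrix (·, j) (·, j')).trace := by
  rw [steer_apply, ptraceA_apply_eq_trace_submatrix, submatrix_kronecker_one_mul]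

lemma steer_one : steer X 1 = ptraceA X := by
  rw [steer_apply, one_kronecker_one, Matrix.one_mul]

lemma trace_steer (N : Matrix (Fin dA) (Fin dA) ℂ) : (steer X N).trace = (N * ptraceB X).trace := by
  rw [ptraceB_eq_sum_submatrix, Matrix.mul_sum, trace_sum]
  exact Finset.sum_congr rfl fun j _ => steer_apply_apply X N j j

lemma steer_mul (A B : Matrix (Fin dA) (Fin dA) ℂ) :
    steer X (A * B) = ptraceA ((B ⊗ₖ 1) * X * (A ⊗ₖ 1)) := by
  ext j j'
  rw [steer_apply_apply, ptraceA_apply_eq_trace_submatrix, submatrix_mul_kronecker_one,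
    submatrix_kronecker_one_mul, Matrix.mul_assoc, trace_mul_comm]

variable {X}

lemma isHermitian_steer {H : Matrix (Fin dA) (Fin dA) ℂ} (hH : H.IsHermitian)
    (hX : X.IsHermitian) : (steer X H).IsHermitian := by
  ext j j'
  rw [conjTranspose_apply, steer_apply_apply, steer_apply_apply, ← trace_conjTranspose,
    conjTranspose_mul, conjTranspose_submatrix, hH.eq, hX.eq, trace_mul_comm]

open scoped MatrixOrder in
lemma posSemidef_steer {M : Matrix (Fin dA) (Fin dA) ℂ} (hM : M.PosSemidef)
    (hX : X.PosSemidef) : (steer X M).PosSemidef := by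
  obtain ⟨B, rfl⟩ := CStarAlgebra.nonneg_iff_eq_star_mul_self.mp hM.nonneg
  have := hX.mul_mul_conjTranspose_same (B ⊗ₖ (1 : Matrix (Fin dB) (Fin dB) ℂ))
  rw [conjTranspose_kronecker, conjTranspose_one, ← star_eq_conjTranspose] at this
  rw [steer_mul]
  exact posSemidef_ptraceA this

lemma exists_steer_apply_ne {p q : Fin dA × Fin dB}
    (hpq : X p q ≠ (ptraceB X ⊗ₖ ptraceA X) p q) :
    ∃ H : Matrix (Fin dA) (Fin dA) ℂ, H.IsHermitian ∧ (1 - H).PosSemidef ∧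
      (1 + H).PosSemidef ∧ steer X H p.2 q.2 ≠ (steer X H).trace * ptraceA X p.2 q.2 := by
  set C := X.submatrix (·, p.2) (·, q.2) - ptraceA X p.2 q.2 • ptraceB X
  have hC : C ≠ 0 := fun h => hpq <| by
    simpa [C, sub_eq_zero, mul_comm] using congrFun (congrFun h p.1) q.1
  obtain ⟨H, hH, hH₁, hH₂, hHC⟩ := exists_isHermitian_trace_mul_ne_zero hC
  refine ⟨H, hH, hH₁, hH₂, fun h => hHC ?_⟩
  rw [Matrix.mul_sub, trace_sub, Matrix.mul_smul, trace_smul, ← steer_apply_apply, ← trace_steer,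
    h, smul_eq_mul, mul_comm, sub_self]

end PartialTrace

section Bloch

/-- `(dx σx + dy σy + dz σz) / 2`. -/
noncomputable def blochShift (dx dy dz : ℝ) : Matrix (Fin 2) (Fin 2) ℂ :=
  !![(dz : ℂ) / 2, ((dx : ℂ) - dy * Complex.I) / 2;
     ((dx : ℂ) + dy * Complex.I) / 2, -(dz : ℂ) / 2]

lemma blochState_add_smul_blochShift (rx ry rz dx dy dz δ : ℝ) :
    blochState rx ry rz + (δ : ℂ) • blochShift dx dy dz
      = blochState (rx + δ * dx) (ry + δ * dy) (rz + δ * dz) := by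
  ext i j
  fin_cases i <;> fin_cases j <;> simp [blochState, blochShift] <;> ring

lemma neg_blochShift (dx dy dz : ℝ) : -blochShift dx dy dz = blochShift (-dx) (-dy) (-dz) := by
  ext i j
  fin_cases i <;> fin_cases j <;> simp [blochShift] <;> ring

lemma trace_blochState (rx ry rz : ℝ) : (blochState rx ry rz).trace = 1 := by
  simp [blochState, Matrix.trace_fin_two]
  ring

lemma trace_blochShift (dx dy dz : ℝ) : (blochShift dx dy dz).trace = 0 := by
  simp [blochShift, Matrix.trace_fin_two]
  ring

lemma det_blochState (rx ry rz : ℝ) :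
    (blochState rx ry rz).det = ((1 - (rx ^ 2 + ry ^ 2 + rz ^ 2)) / 4 : ℝ) := by
  simp [blochState, Matrix.det_fin_two]
  ring_nf
  simp [Complex.I_sq]
  ring

lemma bloch_norm_le_one_of_posSemidef {t : ℝ} (ht : 0 < t) {rx ry rz : ℝ}
    (h : ((t : ℂ) • blochState rx ry rz).PosSemidef) : rx ^ 2 + ry ^ 2 + rz ^ 2 ≤ 1 := by
  have hdet := h.det_nonneg
  rw [Matrix.det_smul, det_blochState, Fintype.card_fin] at hdet
  have : 0 ≤ t ^ 2 * ((1 - (rx ^ 2 + ry ^ 2 + rz ^ 2)) / 4) := by exact_mod_cast hdet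
  nlinarith [pow_pos ht 2]

lemma Matrix.IsHermitian.exists_eq_smul_blochState_add_blochShift
    {X : Matrix (Fin 2) (Fin 2) ℂ} (hX : X.IsHermitian) (rx ry rz : ℝ) :
    ∃ h dx dy dz : ℝ, X = (h : ℂ) • blochState rx ry rz + blochShift dx dy dz := by
  set h := (X 0 0).re + (X 1 1).re
  refine ⟨h, 2 * (X 1 0).re - h * rx, 2 * (X 1 0).im - h * ry, 2 * (X 0 0).re - h * (1 + rz), ?_⟩
  have h00 := hX.apply 0 0
  have h11 := hX.apply 1 1
  have h01 := hX.apply 1 0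
  ext i j
  fin_cases i <;> fin_cases j <;> apply Complex.ext <;>
    simp [blochState, blochShift, Complex.ext_iff] at h00 h11 h01 ⊢ <;> linarith

lemma quad_pos_of_blochShift_apply_ne_zero {rx ry rz dx dy dz : ℝ} {j j' : Fin 2}
    (hrz : rz ^ 2 < 1) (hd : blochShift dx dy dz j j' ≠ 0)
    (hside : 0 < rx ^ 2 + ry ^ 2 ∨ j ≠ j') :
    0 < (rx ^ 2 + ry ^ 2) * dz ^ 2 + (1 - rz ^ 2) * (dx ^ 2 + dy ^ 2) := by
  have hz := mul_nonneg (add_nonneg (sq_nonneg rx) (sq_nonneg ry)) (sq_nonneg dz)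
  have hxy := mul_nonneg (sub_nonneg.2 hrz.le) (add_nonneg (sq_nonneg dx) (sq_nonneg dy))
  have hoff (hd : dx = 0 → dy ≠ 0) : 0 < dx ^ 2 + dy ^ 2 := by
    by_contra! h
    exact hd (by nlinarith [sq_nonneg dx, sq_nonneg dy]) (by nlinarith [sq_nonneg dx, sq_nonneg dy])
  fin_cases j <;> fin_cases j' <;> simp [blochShift, Complex.ext_iff] at hd hside
  · nlinarith [mul_pos hside (pow_two_pos_of_ne_zero hd)]
  · nlinarith [mul_pos (sub_pos.2 hrz) (hoff hd)]
  · nlinarith [mul_pos (sub_pos.2 hrz) (hoff hd)]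
  · nlinarith [mul_pos hside (pow_two_pos_of_ne_zero hd)]

end Bloch

section QubitSteering

variable {dA : ℕ} {ρ : Matrix (Fin dA × Fin 2) (Fin dA × Fin 2) ℂ} {rx ry rz : ℝ}

lemma sq_lt_one_of_ptraceA_eq_blochState (hρ : ρ.PosSemidef)
    (hB : ptraceA ρ = blochState rx ry rz) {a a' : Fin dA} {i j : Fin 2} (hij : i ≠ j)
    (hne : ρ (a, i) (a', j) ≠ 0) : rz ^ 2 < 1 := by
  have hi : ptraceA ρ i i ≠ 0 := fun h => hne <| by
    rw [← hρ.1.apply, hρ.apply_eq_zero_of_apply_self_eq_zero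
      (hρ.apply_eq_zero_of_ptraceA_eq_zero h a), star_zero]
  have hj : ptraceA ρ j j ≠ 0 := fun h =>
    hne (hρ.apply_eq_zero_of_apply_self_eq_zero (hρ.apply_eq_zero_of_ptraceA_eq_zero h a') _)
  have hpos (k : Fin 2) : 0 < ptraceA ρ k k :=
    (posSemidef_ptraceA hρ).diag_nonneg.lt_of_ne' (by
      fin_cases i <;> fin_cases j <;> fin_cases k <;> simp_all)
  have h0 : (0 : ℂ) < ((1 + rz) / 2 : ℝ) := by simpa [hB, blochState] using hpos 0
  have h1 : (0 : ℂ) < ((1 - rz) / 2 : ℝ) := by simpa [hB, blochState] using hpos 1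
  rw [Complex.zero_lt_real] at h0 h1
  nlinarith

lemma exists_effect_steering_outside (hρ : ρ.PosSemidef) (hB : ptraceA ρ = blochState rx ry rz)
    {H : Matrix (Fin dA) (Fin dA) ℂ} (hH₁ : (1 - H).PosSemidef) (hH₂ : (1 + H).PosSemidef)
    {h dx dy dz : ℝ} (hX : steer ρ H = (h : ℂ) • blochState rx ry rz + blochShift dx dy dz)
    (hQ : 0 < (rx ^ 2 + ry ^ 2) * dz ^ 2 + (1 - rz ^ 2) * (dx ^ 2 + dy ^ 2)) :
    ∃ M : Matrix (Fin dA) (Fin dA) ℂ, M.IsHermitian ∧ M.PosSemidef ∧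
      ((1 : Matrix (Fin dA) (Fin dA) ℂ) - M).PosSemidef ∧
      ∃ t : ℝ, 0 < t ∧
        ((M ⊗ₖ (1 : Matrix (Fin 2) (Fin 2) ℂ)) * ρ).trace = (t : ℂ) ∧
        ∃ sx sy sz : ℝ, sx ^ 2 + sy ^ 2 + sz ^ 2 ≤ 1 ∧
          ptraceA ((M ⊗ₖ (1 : Matrix (Fin 2) (Fin 2) ℂ)) * ρ) =
            (t : ℂ) • blochState sx sy sz ∧
          (rx ^ 2 + ry ^ 2) * sz ^ 2 + (1 - rz ^ 2) * (sx ^ 2 + sy ^ 2) >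
            rx ^ 2 + ry ^ 2 := by
  wlog hL : 0 ≤ (rx ^ 2 + ry ^ 2) * rz * dz + (1 - rz ^ 2) * (rx * dx + ry * dy)
    generalizing H h dx dy dz
  · refine this (H := -H) (h := -h) (dx := -dx) (dy := -dy) (dz := -dz)
      (by rwa [sub_neg_eq_add]) (by rwa [← sub_eq_add_neg]) ?_ (by linarith) (by linarith)
    rw [map_neg, hX, neg_add, ← neg_smul, neg_blochShift]
    push_cast
    rfl
  set c := (2 * (1 + |h|))⁻¹
  have hc : 0 < c := by positivity
  have hc₁ : c ≤ 1 := inv_le_one_of_one_le₀ (by linarith [abs_nonneg h])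
  have hch : 0 < 1 + c * h := by
    have : |c * h| < 1 := by
      rw [abs_mul, abs_of_pos hc, inv_mul_lt_iff₀ (by positivity)]
      linarith [abs_nonneg h]
    linarith [neg_abs_le (c * h)]
  set M : Matrix (Fin dA) (Fin dA) ℂ := (2⁻¹ : ℝ) • (1 + c • H)
  have hM : M.PosSemidef := hH₂.half_smul_one_add_smul hc.le hc₁
  have hM' : (1 - M).PosSemidef := by
    rw [show 1 - M = (2⁻¹ : ℝ) • (1 + c • -H) by module]
    exact (by rwa [← sub_eq_add_neg] : (1 + -H).PosSemidef).half_smul_one_add_smul hc.le hc₁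
  set t := (1 + c * h) / 2
  set δ := c / (1 + c * h)
  have ht : 0 < t := by positivity
  have hδ : 0 < δ := by positivity
  have hsteer : steer ρ M = (t : ℂ) • blochState (rx + δ * dx) (ry + δ * dy) (rz + δ * dz) := by
    have ht' : (t : ℂ) = (1 + c * h) / 2 := by simp [t]
    have htδ : (t : ℂ) * δ = c / 2 := by
      exact_mod_cast (by simp only [t, δ]; field_simp : t * δ = c / 2)
    rw [← blochState_add_smul_blochShift, LinearMap.map_smul_of_tower, map_add,
      LinearMap.map_smul_of_tower, steer_one, hB, hX]
    simp only [← Complex.coe_smul]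
    linear_combination (norm := module) (-ht') • blochState rx ry rz - htδ • blochShift dx dy dz
  refine ⟨M, hM.1, hM, hM', t, ht, ?_, _, _, _,
    bloch_norm_le_one_of_posSemidef ht (hsteer ▸ posSemidef_steer hM hρ), hsteer, ?_⟩
  · rw [← trace_ptraceA, ← steer_apply, hsteer, trace_smul, trace_blochState, smul_eq_mul, mul_one]
  · nlinarith [mul_nonneg hδ.le hL, mul_pos (pow_pos hδ 2) hQ]

end QubitSteering

theorem correlations_enhance_incoherent_conversion_general (dA : ℕ)
    (ρ : Matrix (Fin dA × Fin 2) (Fin dA × Fin 2) ℂ)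
    (hρ : ρ.PosSemidef)
    (hcorr : ρ ≠ ptraceB ρ ⊗ₖ ptraceA ρ)
    (hnqi : ∃ (a a' : Fin dA) (i j : Fin 2), i ≠ j ∧ ρ (a, i) (a', j) ≠ 0)
    (rx ry rz : ℝ) (hB : ptraceA ρ = blochState rx ry rz) :
    ∃ M : Matrix (Fin dA) (Fin dA) ℂ, M.IsHermitian ∧ M.PosSemidef ∧
      ((1 : Matrix (Fin dA) (Fin dA) ℂ) - M).PosSemidef ∧
      ∃ t : ℝ, 0 < t ∧
        ((M ⊗ₖ (1 : Matrix (Fin 2) (Fin 2) ℂ)) * ρ).trace = (t : ℂ) ∧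
        ∃ sx sy sz : ℝ, sx ^ 2 + sy ^ 2 + sz ^ 2 ≤ 1 ∧
          ptraceA ((M ⊗ₖ (1 : Matrix (Fin 2) (Fin 2) ℂ)) * ρ) =
            (t : ℂ) • blochState sx sy sz ∧
          (rx ^ 2 + ry ^ 2) * sz ^ 2 + (1 - rz ^ 2) * (sx ^ 2 + sy ^ 2) >
            rx ^ 2 + ry ^ 2 := by
  obtain ⟨a, a', i, j, hij, hne⟩ := hnqi
  have hrz : rz ^ 2 < 1 := sq_lt_one_of_ptraceA_eq_blochState hρ hB hij hne
  obtain ⟨p, q, hpq, hside⟩ : ∃ p q, ρ p q ≠ (ptraceB ρ ⊗ₖ ptraceA ρ) p q ∧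
      (0 < rx ^ 2 + ry ^ 2 ∨ p.2 ≠ q.2) := by
    rcases (add_nonneg (sq_nonneg rx) (sq_nonneg ry)).lt_or_eq with hr | hr
    · obtain ⟨p, q, hpq⟩ : ∃ p q, ρ p q ≠ (ptraceB ρ ⊗ₖ ptraceA ρ) p q := by
        by_contra! h
        exact hcorr (Matrix.ext h)
      exact ⟨p, q, hpq, Or.inl hr⟩
    · have hrx : rx = 0 := by nlinarith
      have hry : ry = 0 := by nlinarith
      have hBij : ptraceA ρ i j = 0 := by
        rw [hB, hrx, hry]
        fin_cases i <;> fin_cases j <;> simp [blochState] at hij ⊢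
      exact ⟨(a, i), (a', j), by simpa [hBij] using hne, Or.inr hij⟩
  obtain ⟨H, hH, hH₁, hH₂, hHpq⟩ := exists_steer_apply_ne hpq
  obtain ⟨h, dx, dy, dz, hX⟩ :=
    (isHermitian_steer hH hρ.1).exists_eq_smul_blochState_add_blochShift rx ry rz
  have hd : blochShift dx dy dz p.2 q.2 ≠ 0 := by
    rw [hX, hB] at hHpq
    simpa [trace_blochState, trace_blochShift] using hHpq
  exact exists_effect_steering_outside hρ hB hH₁ hH₂ hX
    (quad_pos_of_blochShift_apply_ne_zero hrz hd hside)

/-- If a shared state `ρ` on `A ⊗ B` (Bob a qubit) is correlated and not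
quantum-incoherent, then some measurement of Alice steers Bob to a state strictly
outside the ellipsoid of states reachable from `ρᴮ` by stochastic incoherent
operations. -/
theorem correlations_enhance_incoherent_conversion (dA : ℕ)
    (ρ : Matrix (Fin dA × Fin 2) (Fin dA × Fin 2) ℂ)
    (hρ : ρ.PosSemidef) (htr : ρ.trace = 1)
    (hcorr : ρ ≠ ptraceB ρ ⊗ₖ ptraceA ρ)
    (hnqi : ∃ (a a' : Fin dA) (i j : Fin 2), i ≠ j ∧ ρ (a, i) (a', j) ≠ 0)
    (rx ry rz : ℝ) (hB : ptraceA ρ = blochState rx ry rz) :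
    ∃ M : Matrix (Fin dA) (Fin dA) ℂ, M.IsHermitian ∧ M.PosSemidef ∧
      ((1 : Matrix (Fin dA) (Fin dA) ℂ) - M).PosSemidef ∧
      ∃ t : ℝ, 0 < t ∧
        ((M ⊗ₖ (1 : Matrix (Fin 2) (Fin 2) ℂ)) * ρ).trace = (t : ℂ) ∧
        ∃ sx sy sz : ℝ, sx ^ 2 + sy ^ 2 + sz ^ 2 ≤ 1 ∧
          ptraceA ((M ⊗ₖ (1 : Matrix (Fin 2) (Fin 2) ℂ)) * ρ) =
            (t : ℂ) • blochState sx sy sz ∧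
          (rx ^ 2 + ry ^ 2) * sz ^ 2 + (1 - rz ^ 2) * (sx ^ 2 + sy ^ 2) >
            rx ^ 2 + ry ^ 2 :=
  correlations_enhance_incoherent_conversion_general dA ρ hρ hcorr hnqi rx ry rz hB
end

section
/- Let ρ be a qubit density matrix with Bloch vector (r_x,r_y,r_z), and let (s_x,s_y,s_z) ∈ ℝ³ with s_x²+s_y²+s_z² ≤ 1 and s := √(s_x²+s_y²) > 0 be the Bloch vector of a target qubit state. For a unit vector ψ ∈ ℂ² define F(ψ) = min{ 1, (1 − |⟨ψ, σ_z ψ⟩|)·(1 + √(1−s²))/s² } (this is the optimal probability of converting the pure state ψψᴴ into the target state by a stochastic incoherent operation). Then the supremum, over all finite pure-state decompositions ρ = ∑_i q_i·ψ_iψ_iᴴ with q_i > 0, ∑_i q_i = 1 and ψ_i ∈ ℂ² unit vectors, of ∑_i q_i·F(ψ_i) equals min{ 1, (1 − |r_z|)·(1 + √(1−s²))/s² }, and this supremum is attained by a decomposition into two pure states. (This is the content of the paper's Theorem 2 on assisted incoherent state conversion from a purification, after reduction of one-way LQICC protocols to pure-state decompositions of Bob's local state.) -/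
open Matrix BigOperators
open scoped Kronecker Classical ComplexOrder

/-- Optimal conversion probability of a pure qubit state `ψψᴴ` into the target state with
Bloch vector of squared transversal length `s2`. -/
noncomputable def pureConvProb (s2 : ℝ) (ψ : Fin 2 → ℂ) : ℝ :=
  min 1 ((1 - |Complex.normSq (ψ 0) - Complex.normSq (ψ 1)|) *
    (1 + Real.sqrt (1 - s2)) / s2)

/-! For a unit vector `ψ` put `a = ⟨ψ, σ_z ψ⟩`; then `F(ψ) = g(a)` with
`g(a) = min 1 ((1 - |a|) c)` and `c ≥ 0`, a concave function of `a`. The diagonal of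
`ρ = ∑ qᵢ ψᵢψᵢᴴ` gives `r_z = ∑ qᵢ aᵢ`, so Jensen's inequality bounds `∑ qᵢ F(ψᵢ)` by `g(r_z)`.
The bound is attained by the two pure states with Bloch vectors `r ± √(1 - |r|²) w`, where `w`
is a unit vector in the `xy`-plane orthogonal to `r`: both have `z`-component `r_z`, and `r`
is their midpoint. -/

open Complex ComplexConjugate

noncomputable def pauliZExpect (ψ : Fin 2 → ℂ) : ℝ :=
  normSq (ψ 0) - normSq (ψ 1)

noncomputable def convProbOfPauliZ (s2 a : ℝ) : ℝ :=
  min 1 ((1 - |a|) * (1 + √(1 - s2)) / s2)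

lemma pureConvProb_eq_convProbOfPauliZ (s2 : ℝ) (ψ : Fin 2 → ℂ) :
    pureConvProb s2 ψ = convProbOfPauliZ s2 (pauliZExpect ψ) :=
  rfl

lemma concaveOn_convProbOfPauliZ {s2 : ℝ} (hs2 : 0 ≤ s2) :
    ConcaveOn ℝ Set.univ (convProbOfPauliZ s2) := by
  set c := (1 + √(1 - s2)) / s2
  have hlin : ConcaveOn ℝ Set.univ fun a : ℝ => (1 - |a|) * (1 + √(1 - s2)) / s2 :=
    (((convexOn_norm convex_univ).smul (by positivity : 0 ≤ c)).neg.add_const c).congr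
      fun a _ => by simp only [Pi.add_apply, Pi.neg_apply, smul_eq_mul, Real.norm_eq_abs, c]; ring
  exact (concaveOn_const 1 convex_univ).inf hlin

lemma eq_sum_pauliZExpect_of_blochState_eq {rx ry rz : ℝ} {N : ℕ} {q : Fin N → ℝ}
    {ψ : Fin N → Fin 2 → ℂ}
    (hρ : blochState rx ry rz = ∑ i, (q i : ℂ) • vecMulVec (ψ i) (star (ψ i))) :
    rz = ∑ i, q i * pauliZExpect (ψ i) := by
  have h0 := congrFun (congrFun hρ 0) 0
  have h1 := congrFun (congrFun hρ 1) 1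
  simp only [blochState, Matrix.sum_apply, Matrix.smul_apply, vecMulVec_apply, Pi.star_apply,
    smul_eq_mul, Complex.star_def, mul_conj, of_apply, cons_val', cons_val_zero, cons_val_one,
    empty_val', cons_val_fin_one] at h0 h1
  have h0' : (1 + rz) / 2 = ∑ i, q i * normSq (ψ i 0) := by exact_mod_cast h0
  have h1' : (1 - rz) / 2 = ∑ i, q i * normSq (ψ i 1) := by exact_mod_cast h1
  simp only [pauliZExpect, mul_sub, Finset.sum_sub_distrib, ← h0', ← h1']
  ring

lemma sum_mul_pureConvProb_le {s2 rx ry rz : ℝ} (hs2 : 0 ≤ s2) {N : ℕ} {q : Fin N → ℝ}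
    {ψ : Fin N → Fin 2 → ℂ} (hq : ∀ i, 0 ≤ q i) (hq1 : ∑ i, q i = 1)
    (hρ : blochState rx ry rz = ∑ i, (q i : ℂ) • vecMulVec (ψ i) (star (ψ i))) :
    ∑ i, q i * pureConvProb s2 (ψ i) ≤ convProbOfPauliZ s2 rz := by
  rw [eq_sum_pauliZExpect_of_blochState_eq hρ]
  exact (concaveOn_convProbOfPauliZ hs2).le_map_sum (fun i _ => hq i) hq1
    (fun i _ => Set.mem_univ _)

lemma blochState_eq_vecMulVec {nx ny nz : ℝ} {ψ : Fin 2 → ℂ}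
    (h0 : normSq (ψ 0) = (1 + nz) / 2) (h1 : normSq (ψ 1) = (1 - nz) / 2)
    (h10 : ψ 1 * conj (ψ 0) = (nx + ny * I) / 2) :
    blochState nx ny nz = vecMulVec ψ (star ψ) := by
  have h01 : ψ 0 * conj (ψ 1) = (nx - ny * I) / 2 := by
    have := congrArg conj h10
    simp only [map_mul, conj_conj, map_div₀, map_add, conj_ofReal, conj_I, map_ofNat] at this
    rw [mul_comm, this]; ring
  ext i j
  fin_cases i <;> fin_cases j <;>
    simp [blochState, vecMulVec_apply, mul_conj, h0, h1, h01, h10]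

lemma exists_vecMulVec_eq_blochState {nx ny nz : ℝ} (hn : nx ^ 2 + ny ^ 2 + nz ^ 2 = 1) :
    ∃ ψ : Fin 2 → ℂ, normSq (ψ 0) = (1 + nz) / 2 ∧ normSq (ψ 1) = (1 - nz) / 2 ∧
      blochState nx ny nz = vecMulVec ψ (star ψ) := by
  set α := √((1 + nz) / 2)
  have hα : α ^ 2 = (1 + nz) / 2 := Real.sq_sqrt (by nlinarith)
  by_cases hα0 : α = 0
  · have hz : nz = -1 := by rw [hα0] at hα; linarith
    have hx : nx = 0 := by nlinarith
    have hy : ny = 0 := by nlinarith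
    refine ⟨![0, 1], ?_, ?_, blochState_eq_vecMulVec ?_ ?_ ?_⟩ <;> simp [hx, hy, hz]
  · set w : ℂ := (nx + ny * I) / (2 * α)
    have hw : normSq w = (1 - nz) / 2 := by
      rw [normSq_div, normSq_add_mul_I, normSq_mul, normSq_ofReal, normSq_ofNat]
      field_simp
      nlinarith
    have hα' : normSq α = (1 + nz) / 2 := by rw [normSq_ofReal, ← hα, sq]
    refine ⟨![α, w], hα', hw, blochState_eq_vecMulVec hα' hw ?_⟩
    simp only [cons_val_one, cons_val_zero, conj_ofReal, w]
    field_simp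

lemma exists_unit_orthogonal (x y : ℝ) : ∃ u v : ℝ, u ^ 2 + v ^ 2 = 1 ∧ x * u + y * v = 0 := by
  by_cases h : x ^ 2 + y ^ 2 = 0
  · exact ⟨1, 0, by norm_num, by nlinarith⟩
  · refine ⟨-y / √(x ^ 2 + y ^ 2), x / √(x ^ 2 + y ^ 2), ?_, by ring⟩
    rw [div_pow, div_pow, Real.sq_sqrt (by positivity)]
    field_simp
    ring

lemma blochState_affine_combination {a b : ℝ} (hab : a + b = 1) (x y z x' y' z' : ℝ) :
    blochState (a * x + b * x') (a * y + b * y') (a * z + b * z') =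
      (a : ℂ) • blochState x y z + (b : ℂ) • blochState x' y' z' := by
  obtain rfl : b = 1 - a := by linarith
  ext i j
  fin_cases i <;> fin_cases j <;> simp [blochState] <;> ring

lemma exists_two_pure_decomposition {rx ry rz : ℝ} (hr : rx ^ 2 + ry ^ 2 + rz ^ 2 ≤ 1) :
    ∃ (q : Fin 2 → ℝ) (ψ : Fin 2 → Fin 2 → ℂ), (∀ i, 0 < q i) ∧ ∑ i, q i = 1 ∧
      (∀ i, ∑ j, normSq (ψ i j) = 1) ∧
      blochState rx ry rz = ∑ i, (q i : ℂ) • vecMulVec (ψ i) (star (ψ i)) ∧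
      ∀ i, pauliZExpect (ψ i) = rz := by
  obtain ⟨u, v, huv, hperp⟩ := exists_unit_orthogonal rx ry
  set t := √(1 - (rx ^ 2 + ry ^ 2 + rz ^ 2))
  have ht : t ^ 2 = 1 - (rx ^ 2 + ry ^ 2 + rz ^ 2) := Real.sq_sqrt (by linarith)
  obtain ⟨φ, hφ0, hφ1, hφ⟩ := exists_vecMulVec_eq_blochState
    (nx := rx + t * u) (ny := ry + t * v) (nz := rz)
    (by linear_combination ht + t ^ 2 * huv + 2 * t * hperp)
  obtain ⟨χ, hχ0, hχ1, hχ⟩ := exists_vecMulVec_eq_blochState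
    (nx := rx - t * u) (ny := ry - t * v) (nz := rz)
    (by linear_combination ht + t ^ 2 * huv - 2 * t * hperp)
  refine ⟨![1 / 2, 1 / 2], ![φ, χ], ?_, ?_, ?_, ?_, ?_⟩
  · intro i; fin_cases i <;> norm_num
  · norm_num
  · intro i; fin_cases i <;> simp [Fin.sum_univ_two, hφ0, hφ1, hχ0, hχ1] <;> ring
  · have hmid := blochState_affine_combination (a := 1 / 2) (b := 1 / 2) (by norm_num)
      (rx + t * u) (ry + t * v) rz (rx - t * u) (ry - t * v) rz
    simp only [Fin.sum_univ_two, cons_val_zero, cons_val_one]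
    rw [← hφ, ← hχ, ← hmid]
    congr 1 <;> ring
  · intro i; fin_cases i <;> simp [pauliZExpect, hφ0, hφ1, hχ0, hχ1] <;> ring

theorem assisted_conversion_from_purification_general
    (rx ry rz sx sy : ℝ)
    (hr : rx ^ 2 + ry ^ 2 + rz ^ 2 ≤ 1)
    (T : Set ℝ)
    (hT : T = {x : ℝ | ∃ (N : ℕ) (q : Fin N → ℝ) (ψ : Fin N → Fin 2 → ℂ),
      (∀ i, 0 < q i) ∧ (∑ i, q i = 1) ∧
      (∀ i, ∑ j, Complex.normSq (ψ i j) = 1) ∧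
      blochState rx ry rz = ∑ i, (q i : ℂ) • Matrix.vecMulVec (ψ i) (star (ψ i)) ∧
      x = ∑ i, q i * pureConvProb (sx ^ 2 + sy ^ 2) (ψ i)}) :
    sSup T = min 1 ((1 - |rz|) * (1 + Real.sqrt (1 - (sx ^ 2 + sy ^ 2))) /
        (sx ^ 2 + sy ^ 2)) ∧
    ∃ (q : Fin 2 → ℝ) (ψ : Fin 2 → Fin 2 → ℂ),
      (∀ i, 0 < q i) ∧ (∑ i, q i = 1) ∧
      (∀ i, ∑ j, Complex.normSq (ψ i j) = 1) ∧
      blochState rx ry rz = ∑ i, (q i : ℂ) • Matrix.vecMulVec (ψ i) (star (ψ i)) ∧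
      ∑ i, q i * pureConvProb (sx ^ 2 + sy ^ 2) (ψ i) = sSup T := by
  obtain ⟨q, ψ, hq, hq1, hψ, hρ, hz⟩ := exists_two_pure_decomposition hr
  have hval : ∑ i, q i * pureConvProb (sx ^ 2 + sy ^ 2) (ψ i) =
      convProbOfPauliZ (sx ^ 2 + sy ^ 2) rz := by
    simp only [pureConvProb_eq_convProbOfPauliZ, hz, ← Finset.sum_mul, hq1, one_mul]
  have hgreatest : IsGreatest T (convProbOfPauliZ (sx ^ 2 + sy ^ 2) rz) := by
    subst hT
    refine ⟨⟨2, q, ψ, hq, hq1, hψ, hρ, hval.symm⟩, ?_⟩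
    rintro x ⟨N, q', ψ', hq', hq1', -, hρ', rfl⟩
    exact sum_mul_pureConvProb_le (by positivity) (fun i => (hq' i).le) hq1' hρ'
  exact ⟨hgreatest.csSup_eq, q, ψ, hq, hq1, hψ, hρ, hval.trans hgreatest.csSup_eq.symm⟩

/-- **Theorem 2 (paper).** The optimal assisted conversion probability, expressed as a
supremum over pure-state decompositions of Bob's local state, equals
`min{1, (1-|rz|)(1+√(1-s²))/s²}`, and it is attained by a two-element decomposition. -/
theorem assisted_conversion_from_purification
    (rx ry rz sx sy sz : ℝ)
    (hr : rx ^ 2 + ry ^ 2 + rz ^ 2 ≤ 1) (hs : sx ^ 2 + sy ^ 2 + sz ^ 2 ≤ 1)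
    (hsc : 0 < sx ^ 2 + sy ^ 2)
    (T : Set ℝ)
    (hT : T = {x : ℝ | ∃ (N : ℕ) (q : Fin N → ℝ) (ψ : Fin N → Fin 2 → ℂ),
      (∀ i, 0 < q i) ∧ (∑ i, q i = 1) ∧
      (∀ i, ∑ j, Complex.normSq (ψ i j) = 1) ∧
      blochState rx ry rz = ∑ i, (q i : ℂ) • Matrix.vecMulVec (ψ i) (star (ψ i)) ∧
      x = ∑ i, q i * pureConvProb (sx ^ 2 + sy ^ 2) (ψ i)}) :
    sSup T = min 1 ((1 - |rz|) * (1 + Real.sqrt (1 - (sx ^ 2 + sy ^ 2))) /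
        (sx ^ 2 + sy ^ 2)) ∧
    ∃ (q : Fin 2 → ℝ) (ψ : Fin 2 → Fin 2 → ℂ),
      (∀ i, 0 < q i) ∧ (∑ i, q i = 1) ∧
      (∀ i, ∑ j, Complex.normSq (ψ i j) = 1) ∧
      blochState rx ry rz = ∑ i, (q i : ℂ) • Matrix.vecMulVec (ψ i) (star (ψ i)) ∧
      ∑ i, q i * pureConvProb (sx ^ 2 + sy ^ 2) (ψ i) = sSup T :=
  assisted_conversion_from_purification_general rx ry rz sx sy hr T hT
end

section
/- For a d×d density matrix ρ define the Δ-robustness of coherence C_{Δ,R}(ρ) = inf{ t ≥ 0 | ∃ a positive semidefinite d×d matrix τ with Δτ = Δρ such that ρ + t·τ is diagonal }. If ρ and σ are d×d density matrices, p > 0, and there exists a finite family (K_i) of strictly incoherent d×d Kraus operators with ∑_i K_iᴴK_i ⪯ I and ∑_i K_i ρ K_iᴴ = p·σ, then C_{Δ,R}(σ) ≤ C_{Δ,R}(ρ). (The Δ-robustness of coherence cannot increase under stochastic strictly incoherent operations, a necessary condition for stochastic SIO conversion in any dimension.) -/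
open Matrix BigOperators
open scoped Kronecker Classical ComplexOrder

/-- The Δ-robustness of coherence:
`C_{Δ,R}(ρ) = inf{ t ≥ 0 | ∃ τ ⪰ 0, Δτ = Δρ, ρ + tτ diagonal }`. -/
noncomputable def CDR {d : ℕ} (ρ : Matrix (Fin d) (Fin d) ℂ) : ℝ :=
  sInf {t : ℝ | 0 ≤ t ∧ ∃ τ : Matrix (Fin d) (Fin d) ℂ,
    τ.PosSemidef ∧ dephase τ = dephase ρ ∧ (ρ + (t : ℂ) • τ).IsDiag}

/-! A strictly incoherent Kraus operator commutes with dephasing, `Δ (K X Kᴴ) = K (Δ X) Kᴴ`, so the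
normalized operation `Φ = p⁻¹ ∑ᵢ Kᵢ · Kᵢᴴ` is a positive linear map commuting with `Δ`. Such a
map sends every feasible pair `(t, τ)` for `ρ` to the feasible pair `(t, Φ τ)` for `σ = Φ ρ`, so
the feasible set of `σ` contains that of `ρ`. To compare the infima (`sInf ∅ = 0`) the feasible
set of `ρ` must be nonempty: by Cauchy–Schwarz `ρ ⪯ d • Δ ρ`, so `t = d + 1` is feasible. -/

lemma norm_sum_sq_le_card_mul_sum_sq {ι E : Type*} [Fintype ι] [SeminormedAddCommGroup E]
    (f : ι → E) : ‖∑ i, f i‖ ^ 2 ≤ Fintype.card ι * ∑ i, ‖f i‖ ^ 2 := by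
  refine (pow_le_pow_left₀ (norm_nonneg _) (norm_sum_le _ _) 2).trans ?_
  simpa using sq_sum_le_card_mul_sum_sq (s := Finset.univ) (f := fun i => ‖f i‖)

namespace Matrix

variable {m n : Type*} [Fintype m] [Fintype n]

lemma star_dotProduct_conjTranspose_mul_self_mulVec (B : Matrix m n ℂ) (x : n → ℂ) :
    star x ⬝ᵥ (Bᴴ * B) *ᵥ x = ((∑ k, ‖(B *ᵥ x) k‖ ^ 2 : ℝ) : ℂ) := by
  rw [← mulVec_mulVec, dotProduct_mulVec, ← star_mulVec]
  push_cast
  simp [dotProduct, Complex.conj_mul']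

lemma star_dotProduct_diagonal_mulVec [DecidableEq n] (v : n → ℂ) (x : n → ℂ) :
    star x ⬝ᵥ diagonal v *ᵥ x = ∑ j, v j * (‖x j‖ ^ 2 : ℝ) := by
  push_cast
  simp only [dotProduct, mulVec_diagonal, Pi.star_apply, RCLike.star_def]
  refine Finset.sum_congr rfl fun j _ => ?_
  rw [← Complex.conj_mul']
  ring

omit [Fintype n] in
lemma conjTranspose_mul_self_apply_self (B : Matrix m n ℂ) (j : n) :
    (Bᴴ * B) j j = ((∑ k, ‖B k j‖ ^ 2 : ℝ) : ℂ) := by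
  push_cast
  simp [mul_apply, Complex.conj_mul']

end Matrix

section Dephase

variable {d : ℕ}

lemma dephase_apply (X : Matrix (Fin d) (Fin d) ℂ) (i j : Fin d) :
    dephase X i j = if i = j then X i i else 0 := by
  simp [dephase, diagonal_apply]

lemma isDiag_iff_dephase_eq {X : Matrix (Fin d) (Fin d) ℂ} : X.IsDiag ↔ dephase X = X := by
  refine ⟨fun h => ?_, fun h => h ▸ isDiag_diagonal _⟩
  ext i j
  by_cases hij : i = j
  · simp [dephase_apply, hij]
  · simp [dephase_apply, hij, h hij]

@[simp]
lemma dephase_dephase (X : Matrix (Fin d) (Fin d) ℂ) : dephase (dephase X) = dephase X :=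
  isDiag_iff_dephase_eq.mp (isDiag_diagonal _)

lemma dephase_sub (X Y : Matrix (Fin d) (Fin d) ℂ) :
    dephase (X - Y) = dephase X - dephase Y := by
  simp [dephase, diag_sub]

lemma dephase_smul (c : ℂ) (X : Matrix (Fin d) (Fin d) ℂ) :
    dephase (c • X) = c • dephase X := by
  simp [dephase, diag_smul]

lemma dephase_sum {ι : Type*} (s : Finset ι) (X : ι → Matrix (Fin d) (Fin d) ℂ) :
    dephase (∑ i ∈ s, X i) = ∑ i ∈ s, dephase (X i) := by
  ext i j
  by_cases hij : i = j <;> simp [dephase_apply, Matrix.sum_apply, hij]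

lemma posSemidef_dephase {ρ : Matrix (Fin d) (Fin d) ℂ} (hρ : ρ.PosSemidef) :
    (dephase ρ).PosSemidef :=
  .diagonal fun _ => hρ.diag_nonneg

theorem Matrix.PosSemidef.smul_dephase_sub {ρ : Matrix (Fin d) (Fin d) ℂ}
    (hρ : ρ.PosSemidef) {c : ℝ} (hc : (d : ℝ) ≤ c) :
    ((c : ℂ) • dephase ρ - ρ).PosSemidef := by
  have hc0 : (0 : ℂ) ≤ c := Complex.zero_le_real.mpr ((Nat.cast_nonneg d).trans hc)
  refine .of_dotProduct_mulVec_nonneg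
    (((posSemidef_dephase hρ).smul hc0).isHermitian.sub hρ.isHermitian) fun x => ?_
  obtain ⟨B, rfl⟩ : ∃ B : Matrix (Fin d) (Fin d) ℂ, ρ = Bᴴ * B := by
    open scoped MatrixOrder in
    exact CStarAlgebra.nonneg_iff_eq_star_mul_self.mp hρ.nonneg
  set a := ∑ j, (∑ k, ‖B k j‖ ^ 2) * ‖x j‖ ^ 2 with ha
  have hquad : star x ⬝ᵥ ((c : ℂ) • dephase (Bᴴ * B) - Bᴴ * B) *ᵥ x
      = ((c * a - ∑ k, ‖(B *ᵥ x) k‖ ^ 2 : ℝ) : ℂ) := by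
    rw [sub_mulVec, dotProduct_sub, smul_mulVec, dotProduct_smul, dephase,
      star_dotProduct_diagonal_mulVec, star_dotProduct_conjTranspose_mul_self_mulVec]
    simp only [diag, conjTranspose_mul_self_apply_self, ha]
    push_cast
    simp [Finset.mul_sum]
  have hCS : ∑ k, ‖(B *ᵥ x) k‖ ^ 2 ≤ d * a := calc
    _ ≤ ∑ k, (d : ℝ) * ∑ j, ‖B k j * x j‖ ^ 2 := Finset.sum_le_sum fun k _ => by
      simpa [mulVec, dotProduct] using norm_sum_sq_le_card_mul_sum_sq fun j => B k j * x j
    _ = d * a := by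
      simp only [← Finset.mul_sum, norm_mul, mul_pow, ha, Finset.sum_mul]
      rw [Finset.sum_comm]
  have ha0 : 0 ≤ a := by positivity
  rw [hquad]
  exact Complex.zero_le_real.mpr (by nlinarith)

end Dephase

section Kraus

variable {d : ℕ}

lemma IsIncoherentKraus.isDiag_mul_mul_conjTranspose {K D : Matrix (Fin d) (Fin d) ℂ}
    (hK : IsIncoherentKraus K) (hD : D.IsDiag) : (K * D * Kᴴ).IsDiag := by
  intro i i' hii'
  simp only [mul_apply, conjTranspose_apply, Finset.sum_mul]
  refine Finset.sum_eq_zero fun j' _ => Finset.sum_eq_zero fun j _ => ?_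
  by_cases hjj' : j = j'
  · subst hjj'
    by_cases hKij : K i j = 0
    · simp [hKij]
    · have hKi'j : K i' j = 0 := by_contra fun h => hii' (hK j i i' hKij h)
      simp [hKi'j]
  · simp [hD hjj']

lemma IsSIKraus.mul_mul_conjTranspose_apply_self {K : Matrix (Fin d) (Fin d) ℂ}
    (hK : IsSIKraus K) (X : Matrix (Fin d) (Fin d) ℂ) (i : Fin d) :
    (K * X * Kᴴ) i i = (K * dephase X * Kᴴ) i i := by
  simp only [mul_apply, conjTranspose_apply, Finset.sum_mul]
  refine Finset.sum_congr rfl fun j' _ => Finset.sum_congr rfl fun j _ => ?_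
  by_cases hjj' : j = j'
  · simp [dephase_apply, hjj']
  · by_cases hKij : K i j = 0
    · simp [hKij]
    · have hKij' : K i j' = 0 := by_contra fun h => hjj' (hK.1 i j j' hKij h)
      simp [hKij']

lemma IsSIKraus.dephase_mul_mul_conjTranspose {K : Matrix (Fin d) (Fin d) ℂ}
    (hK : IsSIKraus K) (X : Matrix (Fin d) (Fin d) ℂ) :
    dephase (K * X * Kᴴ) = K * dephase X * Kᴴ := by
  ext i i'
  by_cases hii' : i = i'
  · subst hii'
    simp [dephase_apply, hK.mul_mul_conjTranspose_apply_self]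
  · rw [dephase_apply, if_neg hii']
    exact (IsIncoherentKraus.isDiag_mul_mul_conjTranspose hK.2 (isDiag_diagonal _) hii').symm

variable {ι : Type*} [Fintype ι]

def krausMap (K : ι → Matrix (Fin d) (Fin d) ℂ) :
    Matrix (Fin d) (Fin d) ℂ →ₗ[ℂ] Matrix (Fin d) (Fin d) ℂ :=
  ∑ i, LinearMap.mulLeft ℂ (K i) ∘ₗ LinearMap.mulRight ℂ (K i)ᴴ

lemma krausMap_apply (K : ι → Matrix (Fin d) (Fin d) ℂ) (X : Matrix (Fin d) (Fin d) ℂ) :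
    krausMap K X = ∑ i, K i * X * (K i)ᴴ := by
  simp [krausMap, mul_assoc]

lemma posSemidef_krausMap {X : Matrix (Fin d) (Fin d) ℂ} (hX : X.PosSemidef)
    (K : ι → Matrix (Fin d) (Fin d) ℂ) : (krausMap K X).PosSemidef := by
  rw [krausMap_apply]
  exact posSemidef_sum _ fun i _ => hX.mul_mul_conjTranspose_same (K i)

lemma dephase_krausMap {K : ι → Matrix (Fin d) (Fin d) ℂ} (hK : ∀ i, IsSIKraus (K i))
    (X : Matrix (Fin d) (Fin d) ℂ) : dephase (krausMap K X) = krausMap K (dephase X) := by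
  simp only [krausMap_apply, dephase_sum, (hK _).dephase_mul_mul_conjTranspose]

end Kraus

section Robustness

variable {d : ℕ}

def cdrFeasible (ρ : Matrix (Fin d) (Fin d) ℂ) : Set ℝ :=
  {t : ℝ | 0 ≤ t ∧ ∃ τ : Matrix (Fin d) (Fin d) ℂ,
    τ.PosSemidef ∧ dephase τ = dephase ρ ∧ (ρ + (t : ℂ) • τ).IsDiag}

lemma mem_cdrFeasible_of_posSemidef {ρ : Matrix (Fin d) (Fin d) ℂ} {t : ℝ} (ht : 0 < t)
    (h : (((t + 1 : ℝ) : ℂ) • dephase ρ - ρ).PosSemidef) : t ∈ cdrFeasible ρ := by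
  have htC : (t : ℂ) ≠ 0 := Complex.ofReal_ne_zero.mpr ht.ne'
  refine ⟨ht.le, (t : ℂ)⁻¹ • (((t + 1 : ℝ) : ℂ) • dephase ρ - ρ),
    h.smul (inv_nonneg.mpr (Complex.zero_le_real.mpr ht.le)), ?_, ?_⟩
  · rw [dephase_smul, dephase_sub, dephase_smul, dephase_dephase, Complex.ofReal_add,
      Complex.ofReal_one, add_smul, one_smul, add_sub_cancel_right, smul_smul,
      inv_mul_cancel₀ htC, one_smul]
  · rw [smul_smul, mul_inv_cancel₀ htC, one_smul, add_sub_cancel]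
    exact (isDiag_diagonal _).smul _

lemma cdrFeasible_nonempty {ρ : Matrix (Fin d) (Fin d) ℂ} (hρ : ρ.PosSemidef) :
    (cdrFeasible ρ).Nonempty :=
  ⟨d + 1, mem_cdrFeasible_of_posSemidef (by positivity)
    (hρ.smul_dephase_sub (by linarith))⟩

lemma cdrFeasible_subset_map (ρ : Matrix (Fin d) (Fin d) ℂ)
    (Φ : Matrix (Fin d) (Fin d) ℂ →ₗ[ℂ] Matrix (Fin d) (Fin d) ℂ)
    (hΦ : ∀ X, X.PosSemidef → (Φ X).PosSemidef) (hΦΔ : ∀ X, dephase (Φ X) = Φ (dephase X)) :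
    cdrFeasible ρ ⊆ cdrFeasible (Φ ρ) := by
  rintro t ⟨ht, τ, hτ, hτρ, hdiag⟩
  refine ⟨ht, Φ τ, hΦ τ hτ, by rw [hΦΔ, hτρ, ← hΦΔ], ?_⟩
  rw [isDiag_iff_dephase_eq] at hdiag ⊢
  rw [← map_smul, ← map_add, hΦΔ, hdiag]

lemma CDR_map_le {ρ : Matrix (Fin d) (Fin d) ℂ} (hρ : ρ.PosSemidef)
    (Φ : Matrix (Fin d) (Fin d) ℂ →ₗ[ℂ] Matrix (Fin d) (Fin d) ℂ)
    (hΦ : ∀ X, X.PosSemidef → (Φ X).PosSemidef) (hΦΔ : ∀ X, dephase (Φ X) = Φ (dephase X)) :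
    CDR (Φ ρ) ≤ CDR ρ :=
  csInf_le_csInf ⟨0, fun _ ht => ht.1⟩ (cdrFeasible_nonempty hρ)
    (cdrFeasible_subset_map ρ Φ hΦ hΦΔ)

end Robustness

theorem CDR_monotone_under_stochastic_SIO_general (d : ℕ)
    (ρ σ : Matrix (Fin d) (Fin d) ℂ)
    (hρ : ρ.PosSemidef)
    (p : ℝ) (hp : 0 < p)
    (hconv : ∃ (N : ℕ) (K : Fin N → Matrix (Fin d) (Fin d) ℂ),
      (∀ i, IsSIKraus (K i)) ∧
      ((1 : Matrix (Fin d) (Fin d) ℂ) - ∑ i, (K i)ᴴ * K i).PosSemidef ∧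
      ∑ i, K i * ρ * (K i)ᴴ = (p : ℂ) • σ) :
    CDR σ ≤ CDR ρ := by
  obtain ⟨N, K, hK, -, hKρ⟩ := hconv
  have hσK : σ = ((p : ℂ)⁻¹ • krausMap K) ρ := by
    rw [LinearMap.smul_apply, krausMap_apply, hKρ,
      inv_smul_smul₀ (Complex.ofReal_ne_zero.mpr hp.ne')]
  have hp_inv : (0 : ℂ) ≤ (p : ℂ)⁻¹ := inv_nonneg.mpr (Complex.zero_le_real.mpr hp.le)
  rw [hσK]
  refine CDR_map_le hρ _ (fun X hX => (posSemidef_krausMap hX K).smul hp_inv) fun X => ?_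
  simp only [LinearMap.smul_apply, dephase_smul, dephase_krausMap hK]

/-- The Δ-robustness of coherence cannot increase under stochastic strictly incoherent
operations. -/
theorem CDR_monotone_under_stochastic_SIO (d : ℕ)
    (ρ σ : Matrix (Fin d) (Fin d) ℂ)
    (hρ : ρ.PosSemidef) (hρtr : ρ.trace = 1)
    (hσ : σ.PosSemidef) (hσtr : σ.trace = 1)
    (p : ℝ) (hp : 0 < p)
    (hconv : ∃ (N : ℕ) (K : Fin N → Matrix (Fin d) (Fin d) ℂ),
      (∀ i, IsSIKraus (K i)) ∧
      ((1 : Matrix (Fin d) (Fin d) ℂ) - ∑ i, (K i)ᴴ * K i).PosSemidef ∧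
      ∑ i, K i * ρ * (K i)ᴴ = (p : ℂ) • σ) :
    CDR σ ≤ CDR ρ :=
  CDR_monotone_under_stochastic_SIO_general d ρ σ hρ p hp hconv
end

section
/- Let d ∈ ℕ and let C be a real-valued function on d×d complex matrices such that for all d×d density matrices: (i) C(η) ≥ 0; (ii) C is convex: for every finite family of density matrices η_i and weights w_i ≥ 0 with ∑_i w_i = 1, C(∑_i w_i·η_i) ≤ ∑_i w_i·C(η_i); (iii) C is monotone under selective incoherent measurements: for every finite family (M_j) of incoherent d×d Kraus operators with ∑_j M_jᴴM_j = I and every density matrix η, ∑_{j : p_j > 0} p_j·C(M_j η M_jᴴ / p_j) ≤ C(η), where p_j = Tr(M_j η M_jᴴ). Then for all d×d density matrices ρ, σ, every p > 0, and all finite families (K_n), (L_m) of incoherent Kraus operators with ∑_n K_nᴴK_n + ∑_m L_mᴴL_m = I and ∑_n K_n ρ K_nᴴ = p·σ, one has p·C(σ) ≤ C(ρ). (The optimal probability of a stochastic incoherent conversion from ρ to σ is bounded by C(ρ)/C(σ) for any coherence measure C.) -/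
open Matrix BigOperators
open scoped Kronecker Classical ComplexOrder

/-!
Split the conversion into its branches `X_i = K_i ρ K_iᴴ`, with probabilities `q_i = Tr X_i`
summing to `p`. Convexity applied to `σ = ∑ (q_i / p) • (X_i / q_i)` gives
`p C(σ) ≤ ∑ q_i C(X_i / q_i)`, and monotonicity under the selective measurement
`{K_i} ∪ {L_j}` bounds the right-hand side by `C(ρ)`, since the discarded `L`-branches
contribute nonnegatively.
-/

namespace Matrix.PosSemidef

variable {ι : Type*} [Fintype ι] {X : Matrix ι ι ℂ}

lemma re_trace_nonneg (hX : X.PosSemidef) : 0 ≤ X.trace.re :=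
  (Complex.nonneg_iff.mp hX.trace_nonneg).1

lemma ofReal_re_trace (hX : X.PosSemidef) : (X.trace.re : ℂ) = X.trace :=
  (Complex.eq_re_of_ofReal_le (r := 0) (by rw [Complex.ofReal_zero]; exact hX.trace_nonneg)).symm

lemma re_trace_smul_inv_smul (hX : X.PosSemidef) :
    (X.trace.re : ℂ) • (X.trace.re : ℂ)⁻¹ • X = X := by
  rcases eq_or_ne X.trace 0 with h | h
  · simp [hX.trace_eq_zero_iff.mp h]
  · rw [smul_smul, hX.ofReal_re_trace, mul_inv_cancel₀ h, one_smul]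

lemma eq_zero_of_not_re_trace_pos (hX : X.PosSemidef) (h : ¬ 0 < X.trace.re) : X = 0 := by
  have hzero : X.trace.re = 0 := le_antisymm (not_lt.mp h) hX.re_trace_nonneg
  rw [← hX.re_trace_smul_inv_smul, hzero]
  simp

lemma inv_re_trace_smul (hX : X.PosSemidef) : ((X.trace.re : ℂ)⁻¹ • X).PosSemidef := by
  rw [← Complex.ofReal_inv]
  exact hX.smul (Complex.zero_le_real.mpr (inv_nonneg.mpr hX.re_trace_nonneg))

lemma trace_inv_re_trace_smul (hX : X.PosSemidef) (h : 0 < X.trace.re) :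
    ((X.trace.re : ℂ)⁻¹ • X).trace = 1 := by
  have htrace : X.trace ≠ 0 := fun h0 => by simp [h0] at h
  rw [trace_smul, smul_eq_mul, hX.ofReal_re_trace, inv_mul_cancel₀ htrace]

end Matrix.PosSemidef

section BranchValue

variable {ι : Type*} [Fintype ι]

noncomputable def branchValue (C : Matrix ι ι ℂ → ℝ) (X : Matrix ι ι ℂ) : ℝ :=
  if 0 < X.trace.re then X.trace.re * C ((X.trace.re : ℂ)⁻¹ • X) else 0

lemma branchValue_nonneg {C : Matrix ι ι ℂ → ℝ}
    (hnonneg : ∀ η : Matrix ι ι ℂ, η.PosSemidef → η.trace = 1 → 0 ≤ C η)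
    {X : Matrix ι ι ℂ} (hX : X.PosSemidef) : 0 ≤ branchValue C X := by
  unfold branchValue
  split_ifs with h
  · exact mul_nonneg h.le (hnonneg _ hX.inv_re_trace_smul (hX.trace_inv_re_trace_smul h))
  · exact le_rfl

theorem mul_le_sum_branchValue {C : Matrix ι ι ℂ → ℝ}
    (hconvex : ∀ (N : ℕ) (w : Fin N → ℝ) (η : Fin N → Matrix ι ι ℂ),
      (∀ i, 0 ≤ w i) → (∑ i, w i = 1) →
      (∀ i, (η i).PosSemidef) → (∀ i, (η i).trace = 1) →
      C (∑ i, (w i : ℂ) • η i) ≤ ∑ i, w i * C (η i))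
    {σ : Matrix ι ι ℂ} (hσ : σ.PosSemidef) (hσtr : σ.trace = 1) {p : ℝ} (hp : 0 < p)
    {N : ℕ} {X : Fin N → Matrix ι ι ℂ} (hX : ∀ i, (X i).PosSemidef)
    (hsum : ∑ i, X i = (p : ℂ) • σ) :
    p * C σ ≤ ∑ i, branchValue C (X i) := by
  set q : Fin N → ℝ := fun i => (X i).trace.re
  have hq_sum : ∑ i, q i = p := by
    simpa [q, trace_sum, hσtr] using congrArg (fun A => A.trace.re) hsum
  -- a branch of probability zero is replaced by `σ` itself, which keeps every `η i` a state
  set η : Fin N → Matrix ι ι ℂ := fun i => if 0 < q i then (q i : ℂ)⁻¹ • X i else σ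
  have hweighted : ∀ i, ((q i / p : ℝ) : ℂ) • η i = (p : ℂ)⁻¹ • X i := by
    intro i
    by_cases hi : 0 < q i
    · simp only [η, if_pos hi, div_eq_inv_mul, Complex.ofReal_mul, Complex.ofReal_inv, mul_smul]
      exact congrArg _ (hX i).re_trace_smul_inv_smul
    · simp [η, q, (hX i).eq_zero_of_not_re_trace_pos hi]
  have hmix : ∑ i, ((q i / p : ℝ) : ℂ) • η i = σ := by
    rw [Finset.sum_congr rfl fun i _ => hweighted i, ← Finset.smul_sum, hsum, smul_smul,
      inv_mul_cancel₀ (Complex.ofReal_ne_zero.mpr hp.ne'), one_smul]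
  have hη : ∀ i, (η i).PosSemidef ∧ (η i).trace = 1 := by
    intro i
    by_cases hi : 0 < q i
    · simp only [η, if_pos hi]
      exact ⟨(hX i).inv_re_trace_smul, (hX i).trace_inv_re_trace_smul hi⟩
    · simp only [η, if_neg hi]
      exact ⟨hσ, hσtr⟩
  have hconv := hconvex N (fun i => q i / p) η (fun i => div_nonneg (hX i).re_trace_nonneg hp.le)
    (by rw [← Finset.sum_div, hq_sum, div_self hp.ne']) (fun i => (hη i).1) (fun i => (hη i).2)
  rw [hmix] at hconv
  calc p * C σ ≤ p * ∑ i, q i / p * C (η i) := mul_le_mul_of_nonneg_left hconv hp.le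
    _ = ∑ i, branchValue C (X i) := by
      rw [Finset.mul_sum]
      refine Finset.sum_congr rfl fun i _ => ?_
      by_cases hi : 0 < q i
      · simp only [branchValue, η]
        rw [if_pos hi, if_pos hi, ← mul_assoc, mul_div_cancel₀ (q i) hp.ne']
      · simp [branchValue, q, (hX i).eq_zero_of_not_re_trace_pos hi]

end BranchValue

theorem sum_branchValue_le_of_incoherent_append {d : ℕ} {C : Matrix (Fin d) (Fin d) ℂ → ℝ}
    (hnonneg : ∀ η : Matrix (Fin d) (Fin d) ℂ, η.PosSemidef → η.trace = 1 → 0 ≤ C η)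
    (hmono : ∀ (N : ℕ) (M : Fin N → Matrix (Fin d) (Fin d) ℂ),
      (∀ j, IsIncoherentKraus (M j)) → (∑ j, (M j)ᴴ * M j = 1) →
      ∀ η : Matrix (Fin d) (Fin d) ℂ, η.PosSemidef → η.trace = 1 →
      ∑ j ∈ Finset.univ.filter (fun j => 0 < (M j * η * (M j)ᴴ).trace.re),
          (M j * η * (M j)ᴴ).trace.re *
            C (((((M j * η * (M j)ᴴ).trace.re : ℝ) : ℂ))⁻¹ • (M j * η * (M j)ᴴ)) ≤ C η)
    {ρ : Matrix (Fin d) (Fin d) ℂ} (hρ : ρ.PosSemidef) (hρtr : ρ.trace = 1)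
    {n m : ℕ} {K : Fin n → Matrix (Fin d) (Fin d) ℂ} {L : Fin m → Matrix (Fin d) (Fin d) ℂ}
    (hK : ∀ i, IsIncoherentKraus (K i)) (hL : ∀ j, IsIncoherentKraus (L j))
    (hcomplete : ∑ i, (K i)ᴴ * K i + ∑ j, (L j)ᴴ * L j = 1) :
    ∑ i, branchValue C (K i * ρ * (K i)ᴴ) ≤ C ρ := by
  have hincoh : ∀ j, IsIncoherentKraus (Fin.append K L j) :=
    Fin.addCases (by simpa using hK) (by simpa using hL)
  have hmeasure := hmono (n + m) (Fin.append K L) hincoh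
    (by simpa [Fin.sum_univ_add] using hcomplete) ρ hρ hρtr
  rw [Finset.sum_filter, Fin.sum_univ_add] at hmeasure
  simp only [Fin.append_left, Fin.append_right] at hmeasure
  refine le_trans (le_add_of_nonneg_right ?_) hmeasure
  exact Finset.sum_nonneg fun j _ =>
    branchValue_nonneg hnonneg (hρ.mul_mul_conjTranspose_same (L j))

/-- For any coherence measure `C` (nonnegative, convex, monotone under selective
incoherent measurements), the probability `p` of any stochastic incoherent conversion
`ρ → p σ` obeys `p C(σ) ≤ C(ρ)`. -/
theorem coherence_measure_bounds_conversion_probability (d : ℕ)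
    (C : Matrix (Fin d) (Fin d) ℂ → ℝ)
    (hnonneg : ∀ η : Matrix (Fin d) (Fin d) ℂ, η.PosSemidef → η.trace = 1 → 0 ≤ C η)
    (hconvex : ∀ (N : ℕ) (w : Fin N → ℝ) (η : Fin N → Matrix (Fin d) (Fin d) ℂ),
      (∀ i, 0 ≤ w i) → (∑ i, w i = 1) →
      (∀ i, (η i).PosSemidef) → (∀ i, (η i).trace = 1) →
      C (∑ i, (w i : ℂ) • η i) ≤ ∑ i, w i * C (η i))
    (hmono : ∀ (N : ℕ) (M : Fin N → Matrix (Fin d) (Fin d) ℂ),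
      (∀ j, IsIncoherentKraus (M j)) → (∑ j, (M j)ᴴ * M j = 1) →
      ∀ η : Matrix (Fin d) (Fin d) ℂ, η.PosSemidef → η.trace = 1 →
      ∑ j ∈ Finset.univ.filter (fun j => 0 < (M j * η * (M j)ᴴ).trace.re),
          (M j * η * (M j)ᴴ).trace.re *
            C (((((M j * η * (M j)ᴴ).trace.re : ℝ) : ℂ))⁻¹ • (M j * η * (M j)ᴴ)) ≤ C η)
    (ρ σ : Matrix (Fin d) (Fin d) ℂ)
    (hρ : ρ.PosSemidef) (hρtr : ρ.trace = 1)
    (hσ : σ.PosSemidef) (hσtr : σ.trace = 1)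
    (p : ℝ) (hp : 0 < p)
    (n m : ℕ) (K : Fin n → Matrix (Fin d) (Fin d) ℂ) (L : Fin m → Matrix (Fin d) (Fin d) ℂ)
    (hK : ∀ i, IsIncoherentKraus (K i)) (hL : ∀ j, IsIncoherentKraus (L j))
    (hcomplete : ∑ i, (K i)ᴴ * K i + ∑ j, (L j)ᴴ * L j = 1)
    (hconv : ∑ i, K i * ρ * (K i)ᴴ = (p : ℂ) • σ) :
    p * C σ ≤ C ρ :=
  calc p * C σ ≤ ∑ i, branchValue C (K i * ρ * (K i)ᴴ) :=
        mul_le_sum_branchValue hconvex hσ hσtr hp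
          (fun i => hρ.mul_mul_conjTranspose_same (K i)) hconv
    _ ≤ C ρ := sum_branchValue_le_of_incoherent_append hnonneg hmono hρ hρtr hK hL hcomplete
end

section
/- For a nonzero vector v ∈ ℂ^d, let the coherence rank r_C(v) be the number of nonzero coordinates of v, and for a d×d density matrix ρ let r_C(ρ) be the minimum, over all finite decompositions ρ = ∑_i p_i·ψ_iψ_iᴴ with p_i > 0 and ψ_i ∈ ℂ^d unit vectors, of max_i r_C(ψ_i). If ρ and σ are d×d density matrices, p > 0, and (K_n) is a finite family of incoherent d×d Kraus operators with ∑_n K_nᴴK_n ⪯ I and ∑_n K_n ρ K_nᴴ = p·σ, then r_C(σ) ≤ r_C(ρ). (The coherence rank can only decrease under stochastic incoherent operations.) -/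
open Matrix BigOperators
open scoped Kronecker Classical ComplexOrder

/-- Coherence rank of a vector: the number of nonzero coordinates. -/
noncomputable def cohRankVec {d : ℕ} (v : Fin d → ℂ) : ℕ :=
  (Finset.univ.filter fun i => v i ≠ 0).card

/-- Coherence rank of a density matrix: the minimum over finite pure-state
decompositions of the maximal coherence rank occurring in the decomposition. -/
noncomputable def cohRank {d : ℕ} (ρ : Matrix (Fin d) (Fin d) ℂ) : ℕ :=
  sInf {k : ℕ | ∃ (N : ℕ) (p : Fin N → ℝ) (ψ : Fin N → Fin d → ℂ),
    (∀ i, 0 < p i) ∧ (∀ i, ∑ j, Complex.normSq (ψ i j) = 1) ∧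
    ρ = ∑ i, (p i : ℂ) • Matrix.vecMulVec (ψ i) (star (ψ i)) ∧
    k = Finset.univ.sup fun i => cohRankVec (ψ i)}

/-!
Take a pure-state decomposition `ρ = ∑ i, c i • ψ i (ψ i)ᴴ` attaining `cohRank ρ`; it exists because
`ρ` is positive semidefinite, so the infimum is not the junk value `sInf ∅ = 0`. Then
`p • σ = ∑ n i, c i • (K n *ᵥ ψ i) (K n *ᵥ ψ i)ᴴ`, and since every column of `K n` has at most one
nonzero entry, `K n *ᵥ ψ i` has no more nonzero coordinates than `ψ i`. Discarding the zero vectors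
and normalizing the others gives a pure-state decomposition of `σ` witnessing
`cohRank σ ≤ cohRank ρ`.
-/

namespace IsIncoherentKraus

variable {d : ℕ} {K : Matrix (Fin d) (Fin d) ℂ}

-- Each coordinate of `ψ` feeds at most one coordinate of `K *ᵥ ψ`.
theorem cohRankVec_mulVec_le (hK : IsIncoherentKraus K) (ψ : Fin d → ℂ) :
    cohRankVec (K *ᵥ ψ) ≤ cohRankVec ψ := by
  set column : Fin d → Finset (Fin d) := fun j => Finset.univ.filter fun i => K i j ≠ 0
  have hcolumn : ∀ j, (column j).card ≤ 1 := fun j =>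
    Finset.card_le_one.mpr fun i hi i' hi' =>
      hK j i i' (Finset.mem_filter.mp hi).2 (Finset.mem_filter.mp hi').2
  have hsupport : (Finset.univ.filter fun i => (K *ᵥ ψ) i ≠ 0) ⊆
      (Finset.univ.filter fun j => ψ j ≠ 0).biUnion column := by
    intro i hi
    have hi : ∑ j, K i j * ψ j ≠ 0 := (Finset.mem_filter.mp hi).2
    obtain ⟨j, -, hj⟩ := Finset.exists_ne_zero_of_sum_ne_zero hi
    exact Finset.mem_biUnion.mpr ⟨j, by simp [right_ne_zero_of_mul hj],
      by simp [column, left_ne_zero_of_mul hj]⟩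
  calc cohRankVec (K *ᵥ ψ) ≤ _ := Finset.card_le_card hsupport
    _ ≤ cohRankVec ψ * 1 := Finset.card_biUnion_le_card_mul _ _ 1 fun j _ => hcolumn j
    _ = cohRankVec ψ := mul_one _

end IsIncoherentKraus

theorem cohRankVec_smul_le {d : ℕ} (c : ℂ) (u : Fin d → ℂ) :
    cohRankVec (c • u) ≤ cohRankVec u :=
  Finset.card_le_card fun j hj => by
    simp only [Finset.mem_filter, Finset.mem_univ, true_and, Pi.smul_apply, smul_eq_mul] at hj ⊢
    exact right_ne_zero_of_mul hj

theorem mul_vecMulVec_star_mul_conjTranspose {R m n : Type*} [NonUnitalSemiring R] [StarRing R]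
    [Fintype n] (K : Matrix m n R) (a : n → R) :
    K * vecMulVec a (star a) * Kᴴ = vecMulVec (K *ᵥ a) (star (K *ᵥ a)) := by
  rw [mul_vecMulVec, vecMulVec_mul, star_mulVec]

theorem sum_mul_sum_smul_vecMulVec_mul_conjTranspose {R ι κ n : Type*} [CommSemiring R]
    [StarRing R] [Fintype ι] [Fintype κ] [Fintype n]
    (K : ι → Matrix n n R) (c : κ → R) (ψ : κ → n → R) :
    ∑ a, K a * (∑ b, c b • vecMulVec (ψ b) (star (ψ b))) * (K a)ᴴ =
      ∑ x : ι × κ, c x.2 • vecMulVec (K x.1 *ᵥ ψ x.2) (star (K x.1 *ᵥ ψ x.2)) := by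
  simp only [Fintype.sum_prod_type, Finset.mul_sum, Finset.sum_mul, mul_smul_comm, smul_mul_assoc,
    mul_vecMulVec_star_mul_conjTranspose]

section Decomposition

variable {d : ℕ}

def decompRanks (ρ : Matrix (Fin d) (Fin d) ℂ) : Set ℕ :=
  {k : ℕ | ∃ (N : ℕ) (p : Fin N → ℝ) (ψ : Fin N → Fin d → ℂ),
    (∀ i, 0 < p i) ∧ (∀ i, ∑ j, Complex.normSq (ψ i j) = 1) ∧
    ρ = ∑ i, (p i : ℂ) • Matrix.vecMulVec (ψ i) (star (ψ i)) ∧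
    k = Finset.univ.sup fun i => cohRankVec (ψ i)}

theorem exists_mem_decompRanks_le_of_forall_mem {α : Type*} {σ : Matrix (Fin d) (Fin d) ℂ}
    (s : Finset α) (c : α → ℝ) (u : α → Fin d → ℂ) {k : ℕ}
    (hc : ∀ x ∈ s, 0 < c x) (hu : ∀ x ∈ s, ∑ j, Complex.normSq (u x j) = 1)
    (hσ : σ = ∑ x ∈ s, (c x : ℂ) • vecMulVec (u x) (star (u x)))
    (hk : ∀ x ∈ s, cohRankVec (u x) ≤ k) :
    ∃ k' ∈ decompRanks σ, k' ≤ k := by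
  let e := s.equivFin
  refine ⟨_, ⟨s.card, fun i => c (e.symm i), fun i => u (e.symm i),
    fun i => hc _ (e.symm i).2, fun i => hu _ (e.symm i).2, ?_, rfl⟩,
    Finset.sup_le fun i _ => hk _ (e.symm i).2⟩
  rw [hσ, ← Finset.sum_coe_sort s]
  exact (e.symm.sum_comp fun x : s => (c x : ℂ) • vecMulVec (u x) (star (u x))).symm

theorem sum_normSq_inv_sqrt_smul {u : Fin d → ℂ} {n : ℝ}
    (hn : ∑ j, Complex.normSq (u j) = n) (hn0 : n ≠ 0) :
    ∑ j, Complex.normSq ((((√n : ℝ) : ℂ)⁻¹ • u) j) = 1 := by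
  have hnonneg : 0 ≤ n := hn ▸ Finset.sum_nonneg fun j _ => Complex.normSq_nonneg _
  simp only [Pi.smul_apply, smul_eq_mul, Complex.normSq_mul, map_inv₀, Complex.normSq_ofReal,
    Real.mul_self_sqrt hnonneg, ← Finset.mul_sum, hn, inv_mul_cancel₀ hn0]

theorem smul_vecMulVec_self_eq_inv_sqrt_smul (c : ℝ) {u : Fin d → ℂ} {n : ℝ}
    (hn : ∑ j, Complex.normSq (u j) = n) :
    (c : ℂ) • vecMulVec u (star u) =
      ((c * n : ℝ) : ℂ) • vecMulVec (((√n : ℝ) : ℂ)⁻¹ • u) (star (((√n : ℝ) : ℂ)⁻¹ • u)) := by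
  have hnonneg : 0 ≤ n := hn ▸ Finset.sum_nonneg fun j _ => Complex.normSq_nonneg _
  rcases hnonneg.eq_or_lt with hzero | hpos
  · have hu : u = 0 := funext fun j =>
      Complex.normSq_eq_zero.mp ((Finset.sum_eq_zero_iff_of_nonneg fun j _ =>
        Complex.normSq_nonneg _).mp (hn.trans hzero.symm) j (Finset.mem_univ j))
    simp [hu]
  · have hsqrt : ((√n : ℝ) : ℂ) ≠ 0 := Complex.ofReal_ne_zero.mpr (Real.sqrt_pos.mpr hpos).ne'
    have hsq : ((√n : ℝ) : ℂ) * ((√n : ℝ) : ℂ) = n := by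
      rw [← Complex.ofReal_mul, Real.mul_self_sqrt hnonneg]
    rw [star_smul, smul_vecMulVec, vecMulVec_smul, smul_smul, smul_smul, star_inv₀,
      Complex.star_def, Complex.conj_ofReal, Complex.ofReal_mul, ← hsq]
    field_simp

theorem exists_mem_decompRanks_le {α : Type*} [Fintype α] {σ : Matrix (Fin d) (Fin d) ℂ}
    (c : α → ℝ) (u : α → Fin d → ℂ) {k : ℕ} (hc : ∀ x, 0 ≤ c x)
    (hσ : σ = ∑ x, (c x : ℂ) • vecMulVec (u x) (star (u x)))
    (hk : ∀ x, cohRankVec (u x) ≤ k) :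
    ∃ k' ∈ decompRanks σ, k' ≤ k := by
  set n : α → ℝ := fun x => ∑ j, Complex.normSq (u x j)
  set v : α → Fin d → ℂ := fun x => ((√(n x) : ℝ) : ℂ)⁻¹ • u x
  have hterm : ∀ x, (c x : ℂ) • vecMulVec (u x) (star (u x)) =
      ((c x * n x : ℝ) : ℂ) • vecMulVec (v x) (star (v x)) := fun x =>
    smul_vecMulVec_self_eq_inv_sqrt_smul (c x) rfl
  have hw : ∀ x, 0 ≤ c x * n x := fun x =>
    mul_nonneg (hc x) (Finset.sum_nonneg fun j _ => Complex.normSq_nonneg _)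
  -- Drop the terms of weight zero; the remaining vectors are nonzero and can be normalized.
  refine exists_mem_decompRanks_le_of_forall_mem (Finset.univ.filter fun x => c x * n x ≠ 0)
    (fun x => c x * n x) v (fun x hx => (hw x).lt_of_ne' (Finset.mem_filter.mp hx).2)
    (fun x hx => sum_normSq_inv_sqrt_smul rfl (right_ne_zero_of_mul (Finset.mem_filter.mp hx).2))
    ?_ (fun x _ => (cohRankVec_smul_le _ _).trans (hk x))
  rw [hσ, Finset.sum_congr rfl fun x _ => hterm x]
  refine (Finset.sum_filter_of_ne (p := fun x => c x * n x ≠ 0) fun x _ hx hzero => hx ?_).symm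
  rw [hzero, Complex.ofReal_zero, zero_smul]

theorem cohRank_le_of_eq_sum {α : Type*} [Fintype α] {σ : Matrix (Fin d) (Fin d) ℂ}
    (c : α → ℝ) (u : α → Fin d → ℂ) {k : ℕ} (hc : ∀ x, 0 ≤ c x)
    (hσ : σ = ∑ x, (c x : ℂ) • vecMulVec (u x) (star (u x)))
    (hk : ∀ x, cohRankVec (u x) ≤ k) :
    cohRank σ ≤ k :=
  let ⟨_, hmem, hle⟩ := exists_mem_decompRanks_le c u hc hσ hk
  (Nat.sInf_le hmem).trans hle

theorem _root_.Matrix.PosSemidef.cohRank_mem_decompRanks {ρ : Matrix (Fin d) (Fin d) ℂ}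
    (hρ : ρ.PosSemidef) : cohRank ρ ∈ decompRanks ρ := by
  obtain ⟨m, v, hv⟩ := Matrix.posSemidef_iff_eq_sum_vecMulVec.mp hρ
  obtain ⟨k, hk, -⟩ := exists_mem_decompRanks_le (fun _ => 1) v (k := d) (fun _ => zero_le_one)
    (by simpa using hv) fun i => (Finset.card_filter_le _ _).trans (Finset.card_fin d).le
  exact Nat.sInf_mem ⟨k, hk⟩

end Decomposition

theorem cohRank_monotone_under_stochastic_IO_general (d : ℕ)
    (ρ σ : Matrix (Fin d) (Fin d) ℂ)
    (hρ : ρ.PosSemidef)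
    (p : ℝ) (hp : 0 < p)
    (N : ℕ) (K : Fin N → Matrix (Fin d) (Fin d) ℂ)
    (hK : ∀ n, IsIncoherentKraus (K n))
    (hconv : ∑ n, K n * ρ * (K n)ᴴ = (p : ℂ) • σ) :
    cohRank σ ≤ cohRank ρ := by
  obtain ⟨M, c, ψ, hc, -, hρdec, hsup⟩ := hρ.cohRank_mem_decompRanks
  have hσ : σ = ∑ x : Fin N × Fin M, ((p⁻¹ * c x.2 : ℝ) : ℂ) •
      vecMulVec (K x.1 *ᵥ ψ x.2) (star (K x.1 *ᵥ ψ x.2)) := by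
    rw [← inv_smul_smul₀ (Complex.ofReal_ne_zero.mpr hp.ne') σ, ← hconv, hρdec,
      sum_mul_sum_smul_vecMulVec_mul_conjTranspose, Finset.smul_sum]
    simp only [smul_smul, Complex.ofReal_mul, Complex.ofReal_inv]
  refine cohRank_le_of_eq_sum (fun x : Fin N × Fin M => p⁻¹ * c x.2) _
    (fun x => mul_nonneg (inv_nonneg.mpr hp.le) (hc x.2).le) hσ fun x => ?_
  calc cohRankVec (K x.1 *ᵥ ψ x.2) ≤ cohRankVec (ψ x.2) := (hK x.1).cohRankVec_mulVec_le _
    _ ≤ cohRank ρ := hsup ▸ Finset.le_sup (f := fun i => cohRankVec (ψ i)) (Finset.mem_univ _)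

/-- The coherence rank can only decrease under stochastic incoherent operations. -/
theorem cohRank_monotone_under_stochastic_IO (d : ℕ)
    (ρ σ : Matrix (Fin d) (Fin d) ℂ)
    (hρ : ρ.PosSemidef) (hρtr : ρ.trace = 1)
    (hσ : σ.PosSemidef) (hσtr : σ.trace = 1)
    (p : ℝ) (hp : 0 < p)
    (N : ℕ) (K : Fin N → Matrix (Fin d) (Fin d) ℂ)
    (hK : ∀ n, IsIncoherentKraus (K n))
    (hsum : ((1 : Matrix (Fin d) (Fin d) ℂ) - ∑ n, (K n)ᴴ * K n).PosSemidef)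
    (hconv : ∑ n, K n * ρ * (K n)ᴴ = (p : ℂ) • σ) :
    cohRank σ ≤ cohRank ρ :=
  cohRank_monotone_under_stochastic_IO_general d ρ σ hρ p hp N K hK hconv
end

section
/- Let h : [0,1] → ℝ, h(x) = −x·log₂(x) − (1−x)·log₂(1−x) (binary entropy, with h(0) = h(1) = 0). Then for all real numbers r_x, r_y, r_z with r_x² + r_y² + r_z² ≤ 1: 1 − h((1 + √(r_x²+r_y²))/2) ≤ h((1 + r_z)/2) − h((1 + √(r_x²+r_y²+r_z²))/2). (Using the closed formulas S(ρ) = h((1+‖r⃗‖)/2), distillable coherence C_d(ρ) = h((1+r_z)/2) − h((1+‖r⃗‖)/2), and the fact that the coherence cost of a qubit state depends only on √(r_x²+r_y²), this inequality expresses the Proposition that among all single-qubit states, the family q·|+⟩⟨+| + (1−q)·|−⟩⟨−| — whose member with Bloch vector (√(r_x²+r_y²),0,0) has the same coherence cost as the state with Bloch vector (r_x,r_y,r_z) — has minimal distillable coherence for fixed coherence cost.) -/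
open Matrix BigOperators
open scoped Kronecker Classical ComplexOrder

/-- Binary entropy `h(x) = -x log₂ x - (1-x) log₂ (1-x)` (with `h(0) = h(1) = 0`). -/
noncomputable def binEntropy (x : ℝ) : ℝ :=
  -(x * Real.logb 2 x) - (1 - x) * Real.logb 2 (1 - x)

/-! With `g r = (1 + r) log (1 + r) + (1 - r) log (1 - r)` one has
`h ((1 + r) / 2) = 1 - g r / (2 log 2)`, so the inequality says `g √u + g √v ≤ g √(u + v)` for
`u = rx² + ry²`, `v = rz²`. Expanding the logarithms, `g √s = ∑ s ^ (k + 1) / ((k + 1) (2k + 1))`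
for `0 ≤ s < 1`: a power series with nonnegative coefficients and no constant term, hence
superadditive. Continuity of `g` carries the inequality to the boundary `u + v = 1`, where the
series is not available. -/

open Filter Topology
open Real (log)

noncomputable def mulLogSymm (r : ℝ) : ℝ :=
  (1 + r) * log (1 + r) + (1 - r) * log (1 - r)

lemma mulLogSymm_neg (r : ℝ) : mulLogSymm (-r) = mulLogSymm r := by
  simp only [mulLogSymm, sub_neg_eq_add, ← sub_eq_add_neg]
  ring

lemma mulLogSymm_sqrt_sq (r : ℝ) : mulLogSymm √(r ^ 2) = mulLogSymm r := by
  rw [Real.sqrt_sq_eq_abs]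
  rcases abs_choice r with h | h <;> simp only [h, mulLogSymm_neg]

lemma continuous_mulLogSymm : Continuous mulLogSymm :=
  (Real.continuous_mul_log.comp (continuous_const.add continuous_id)).add
    (Real.continuous_mul_log.comp (continuous_const.sub continuous_id))

lemma hasSum_mulLogSymm {r : ℝ} (hr : |r| < 1) :
    HasSum (fun k : ℕ => 1 / ((k + 1) * (2 * k + 1)) * (r ^ 2) ^ (k + 1)) (mulLogSymm r) := by
  have hr2 : |r ^ 2| < 1 := by
    rw [abs_pow, sq_lt_one_iff₀ (abs_nonneg r)]; exact hr
  have hlog : log (1 + r) + log (1 - r) = log (1 - r ^ 2) := by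
    have := abs_lt.mp hr
    rw [← Real.log_mul (by linarith) (by linarith)]; ring_nf
  have hsum := ((Real.hasSum_log_sub_log_of_abs_lt_one hr).mul_left r).sub
    (Real.hasSum_pow_div_log_of_abs_lt_one hr2)
  have hval : mulLogSymm r = r * (log (1 + r) - log (1 - r)) - -log (1 - r ^ 2) := by
    rw [sub_neg_eq_add, ← hlog, mulLogSymm]; ring
  refine hval ▸ hsum.congr_fun fun k => ?_
  rw [pow_succ, ← pow_mul]
  field_simp
  ring

lemma hasSum_mulLogSymm_sqrt {s : ℝ} (hs0 : 0 ≤ s) (hs1 : s < 1) :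
    HasSum (fun k : ℕ => 1 / ((k + 1) * (2 * k + 1)) * s ^ (k + 1)) (mulLogSymm √s) := by
  have hr : |√s| < 1 := by
    rwa [abs_of_nonneg (Real.sqrt_nonneg s), Real.sqrt_lt' one_pos, one_pow]
  simpa only [Real.sq_sqrt hs0] using hasSum_mulLogSymm hr

lemma add_le_of_hasSum_pow {a : ℕ → ℝ} (ha : ∀ k, 0 ≤ a k) {u v A B C : ℝ}
    (hu : 0 ≤ u) (hv : 0 ≤ v) (hA : HasSum (fun k => a k * u ^ (k + 1)) A)
    (hB : HasSum (fun k => a k * v ^ (k + 1)) B)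
    (hC : HasSum (fun k => a k * (u + v) ^ (k + 1)) C) : A + B ≤ C :=
  hasSum_le (fun k => by
      rw [← mul_add]
      exact mul_le_mul_of_nonneg_left (pow_add_pow_le hu hv k.succ_ne_zero) (ha k))
    (hA.add hB) hC

lemma Continuous.add_le_map_add_of_forall_lt {f : ℝ → ℝ} (hf : Continuous f)
    (hlt : ∀ u v, 0 ≤ u → 0 ≤ v → u + v < 1 → f u + f v ≤ f (u + v))
    {u v : ℝ} (hu : 0 ≤ u) (hv : 0 ≤ v) (huv : u + v ≤ 1) : f u + f v ≤ f (u + v) := by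
  have hlim : ∀ w : ℝ, Tendsto (fun t => f (t * w)) (𝓝[<] 1) (𝓝 (f w)) := fun w =>
    (hf.tendsto w).comp (((continuous_mul_const w).tendsto' 1 w (one_mul w)).mono_left
      nhdsWithin_le_nhds)
  refine le_of_tendsto_of_tendsto ((hlim u).add (hlim v)) (hlim (u + v)) ?_
  filter_upwards [Ioo_mem_nhdsLT zero_lt_one] with t ht
  rw [mul_add]
  exact hlt _ _ (mul_nonneg ht.1.le hu) (mul_nonneg ht.1.le hv) (by nlinarith [ht.1, ht.2])

lemma mulLogSymm_sqrt_add_le {u v : ℝ} (hu : 0 ≤ u) (hv : 0 ≤ v) (huv : u + v ≤ 1) :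
    mulLogSymm √u + mulLogSymm √v ≤ mulLogSymm √(u + v) := by
  refine (continuous_mulLogSymm.comp Real.continuous_sqrt).add_le_map_add_of_forall_lt
    (fun u v hu hv huv => ?_) hu hv huv
  exact add_le_of_hasSum_pow (fun k => by positivity) hu hv
    (hasSum_mulLogSymm_sqrt hu (by linarith)) (hasSum_mulLogSymm_sqrt hv (by linarith))
    (hasSum_mulLogSymm_sqrt (by positivity) huv)

lemma binEntropy_one_add_div_two (r : ℝ) :
    binEntropy ((1 + r) / 2) = 1 - mulLogSymm r / (2 * log 2) := by
  have half_mul_log (a : ℝ) : a / 2 * log (a / 2) = (a * log a - a * log 2) / 2 := by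
    rcases eq_or_ne a 0 with rfl | ha
    · simp
    · rw [Real.log_div ha two_ne_zero]; ring
  have hlog2 : log 2 ≠ 0 := (Real.log_pos one_lt_two).ne'
  unfold binEntropy Real.logb
  rw [show (1 : ℝ) - (1 + r) / 2 = (1 - r) / 2 by ring, mul_div_assoc', mul_div_assoc',
    half_mul_log, half_mul_log, mulLogSymm]
  field_simp
  ring

/-- Among all single-qubit states, the maximally-coherent-plane family has minimal
distillable coherence for fixed coherence cost:
`1 - h((1+r)/2) ≤ h((1+rz)/2) - h((1+‖r⃗‖)/2)` with `r = √(rx²+ry²)`. -/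
theorem qubit_min_distillable_coherence_for_fixed_cost (rx ry rz : ℝ)
    (h : rx ^ 2 + ry ^ 2 + rz ^ 2 ≤ 1) :
    1 - binEntropy ((1 + Real.sqrt (rx ^ 2 + ry ^ 2)) / 2) ≤
      binEntropy ((1 + rz) / 2) -
        binEntropy ((1 + Real.sqrt (rx ^ 2 + ry ^ 2 + rz ^ 2)) / 2) := by
  have key := mulLogSymm_sqrt_add_le (u := rx ^ 2 + ry ^ 2) (v := rz ^ 2) (by positivity)
    (by positivity) h
  rw [mulLogSymm_sqrt_sq] at key
  have hscaled := div_le_div_of_nonneg_right key (by positivity : (0 : ℝ) ≤ 2 * log 2)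
  rw [add_div] at hscaled
  simp only [binEntropy_one_add_div_two]
  linarith
end
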